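/- arXiv:2304.02630 — 5 statements merged into one kernel-verified Lean document; each statement's English description precedes it below -/
import Mathlib

section
/- The centralizer in SO₄(F) of the element [(diag(1, −1), diag(1, −1))] has cardinality 2(q−1)². -/
set_option linter.unusedSectionVars false

open Matrix

variable (F : Type*) [Field F] [Fintype F] [DecidableEq F]

/-- The group `GL_{2,2}(F)` of pairs of invertible 2×2 matrices with equal determinant. -/
def GL22 : Subgroup (GL (Fin 2) F × GL (Fin 2) F) where
  carrier := {p | Matrix.GeneralLinearGroup.det p.1 = Matrix.GeneralLinearGroup.det p.2}
  one_mem' := by simp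
  mul_mem' := by
    intro a b ha hb
    simp only [Set.mem_setOf_eq, Prod.fst_mul, Prod.snd_mul, _root_.map_mul] at *
    rw [ha, hb]
  inv_mem' := by
    intro a ha
    simp only [Set.mem_setOf_eq, Prod.fst_inv, Prod.snd_inv, map_inv] at *
    rw [ha]

/-- The scalar matrix `aI₂` as an element of `GL₂(F)`. -/
noncomputable def sc (a : Fˣ) : GL (Fin 2) F := Units.map (Matrix.scalar (Fin 2)).toMonoidHom a

lemma sc_pair_mem (a : Fˣ) : (sc F a, sc F a) ∈ GL22 F := rfl

/-- The central embedding `a ↦ (aI₂, aI₂)`. -/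
noncomputable def scalarHom : Fˣ →* GL22 F where
  toFun a := ⟨(sc F a, sc F a), sc_pair_mem F a⟩
  map_one' := by
    apply Subtype.ext
    apply Prod.ext <;> simp [sc]
  map_mul' a b := by
    apply Subtype.ext
    apply Prod.ext <;> simp [sc]

instance scalarHom_range_normal : (scalarHom F).range.Normal := by
  constructor
  rintro n ⟨a, rfl⟩ g
  refine ⟨a, ?_⟩
  have hc : g * scalarHom F a = scalarHom F a * g := by
    apply Subtype.ext
    apply Prod.ext <;>
    · apply Units.ext
      exact (Matrix.scalar_commute (a : F) (fun r => mul_comm _ _) _).symm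
  rw [hc, mul_assoc, mul_inv_cancel, mul_one]

/-- `SO₄(F)` as the quotient of `GL_{2,2}(F)` by the diagonally embedded scalars. -/
abbrev SO4 := GL22 F ⧸ (scalarHom F).range

/-- The class `[(g,h)]` of a pair in `SO₄(F)`. -/
noncomputable def cls : GL22 F → SO4 F := QuotientGroup.mk

section Aux
variable {F : Type*} [Field F] [Fintype F] [DecidableEq F]

/-- diagonal unit -/
noncomputable def Dunit (x y : Fˣ) : GL (Fin 2) F :=
  ⟨!![(x:F),0;0,(y:F)], !![((x⁻¹:Fˣ):F),0;0,((y⁻¹:Fˣ):F)],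
    by rw [Matrix.mul_fin_two, Matrix.one_fin_two]; norm_num,
    by rw [Matrix.mul_fin_two, Matrix.one_fin_two]; norm_num⟩

/-- antidiagonal unit -/
noncomputable def Aunit (x y : Fˣ) : GL (Fin 2) F :=
  ⟨!![0,(x:F);(y:F),0], !![0,((y⁻¹:Fˣ):F);((x⁻¹:Fˣ):F),0],
    by rw [Matrix.mul_fin_two, Matrix.one_fin_two]; norm_num,
    by rw [Matrix.mul_fin_two, Matrix.one_fin_two]; norm_num⟩

@[simp] lemma Dunit_coe (x y : Fˣ) : ((Dunit x y : GL (Fin 2) F) : Matrix (Fin 2) (Fin 2) F) = !![(x:F),0;0,(y:F)] := rfl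
@[simp] lemma Aunit_coe (x y : Fˣ) : ((Aunit x y : GL (Fin 2) F) : Matrix (Fin 2) (Fin 2) F) = !![0,(x:F);(y:F),0] := rfl

lemma Dunit_mem (x y u v : Fˣ) (h : (x:F) * y = u * v) :
    (Dunit x y, Dunit u v) ∈ GL22 F := by
  show Matrix.GeneralLinearGroup.det _ = Matrix.GeneralLinearGroup.det _
  apply Units.ext
  rw [Matrix.GeneralLinearGroup.val_det_apply, Matrix.GeneralLinearGroup.val_det_apply]
  simp [Matrix.det_fin_two_of, h]

lemma Aunit_mem (x y u v : Fˣ) (h : (x:F) * y = u * v) :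
    (Aunit x y, Aunit u v) ∈ GL22 F := by
  show Matrix.GeneralLinearGroup.det _ = Matrix.GeneralLinearGroup.det _
  apply Units.ext
  rw [Matrix.GeneralLinearGroup.val_det_apply, Matrix.GeneralLinearGroup.val_det_apply]
  simp only [Dunit_coe, Aunit_coe, Matrix.det_fin_two_of]
  ring_nf
  rw [mul_comm ((x:F)) (y:F)] at h ⊢ <;> try rw [h]
  all_goals simp [h, mul_comm]

/-- the parametrizing map -/
noncomputable def ff : (Fˣ × Fˣ × Fˣ) ⊕ (Fˣ × Fˣ × Fˣ) → GL22 F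
  | .inl (x,y,u) => ⟨(Dunit x y, Dunit u (x*y*u⁻¹)), by
      apply Dunit_mem; push_cast; field_simp⟩
  | .inr (x,y,u) => ⟨(Aunit x y, Aunit u (x*y*u⁻¹)), by
      apply Aunit_mem; push_cast; field_simp⟩

lemma ff_inj : Function.Injective (ff (F := F)) := by
  rintro (⟨x,y,u⟩|⟨x,y,u⟩) (⟨x',y',u'⟩|⟨x',y',u'⟩) h
  · have h1 := congrArg (fun g => ((g : GL22 F).val.1 : Matrix (Fin 2) (Fin 2) F)) h
    have h2 := congrArg (fun g => ((g : GL22 F).val.2 : Matrix (Fin 2) (Fin 2) F)) h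
    simp only [ff, Dunit_coe] at h1 h2
    have ex : x = x' := Units.ext (by have := congrFun (congrFun h1 0) 0; simpa using this)
    have ey : y = y' := Units.ext (by have := congrFun (congrFun h1 1) 1; simpa using this)
    have eu : u = u' := Units.ext (by have := congrFun (congrFun h2 0) 0; simpa using this)
    subst ex; subst ey; subst eu; rfl
  · exfalso
    have h1 := congrArg (fun g => ((g : GL22 F).val.1 : Matrix (Fin 2) (Fin 2) F)) h
    simp only [ff, Dunit_coe, Aunit_coe] at h1
    have := congrFun (congrFun h1 0) 0
    simp only [Matrix.cons_val_zero, Matrix.cons_val_one, Matrix.head_cons, Matrix.of_apply, Matrix.cons_val'] at this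
    exact x.ne_zero this
  · exfalso
    have h1 := congrArg (fun g => ((g : GL22 F).val.1 : Matrix (Fin 2) (Fin 2) F)) h
    simp only [ff, Dunit_coe, Aunit_coe] at h1
    have := congrFun (congrFun h1 0) 0
    simp only [Matrix.cons_val_zero, Matrix.cons_val_one, Matrix.head_cons, Matrix.of_apply, Matrix.cons_val'] at this
    exact x'.ne_zero this.symm
  · have h1 := congrArg (fun g => ((g : GL22 F).val.1 : Matrix (Fin 2) (Fin 2) F)) h
    have h2 := congrArg (fun g => ((g : GL22 F).val.2 : Matrix (Fin 2) (Fin 2) F)) h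
    simp only [ff, Aunit_coe] at h1 h2
    have ex : x = x' := Units.ext (by have := congrFun (congrFun h1 0) 1; simpa using this)
    have ey : y = y' := Units.ext (by have := congrFun (congrFun h1 1) 0; simpa using this)
    have eu : u = u' := Units.ext (by have := congrFun (congrFun h2 0) 1; simpa using this)
    subst ex; subst ey; subst eu; rfl

end Aux
section Key
variable {F : Type*} [Field F] [Fintype F] [DecidableEq F]

lemma twoNeZero (hq : Odd (Fintype.card F)) : (2:F) ≠ 0 := by
  intro h
  have hchar : ringChar F = 2 :=
    ((Nat.dvd_prime Nat.prime_two).mp (ringChar.dvd (by exact_mod_cast h))).resolve_left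
      CharP.ringChar_ne_one
  have := FiniteField.even_card_iff_char_two.mp hchar
  rw [Nat.odd_iff] at hq
  omega

lemma GL22_ext {g h : GL22 F}
    (h1 : ((g.val.1 : GL (Fin 2) F) : Matrix (Fin 2) (Fin 2) F) = ((h.val.1 : GL (Fin 2) F) : Matrix (Fin 2) (Fin 2) F))
    (h2 : ((g.val.2 : GL (Fin 2) F) : Matrix (Fin 2) (Fin 2) F) = ((h.val.2 : GL (Fin 2) F) : Matrix (Fin 2) (Fin 2) F)) :
    g = h :=
  Subtype.ext (Prod.ext (Units.ext h1) (Units.ext h2))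

lemma key (h2 : (2:F) ≠ 0) (g : GL (Fin 2) F) (a : F)
    (h : (g : Matrix (Fin 2) (Fin 2) F) * !![1,0;0,-1]
       = a • (!![1,0;0,-1] * (g : Matrix (Fin 2) (Fin 2) F))) :
    (a = 1 ∧ (g : Matrix (Fin 2) (Fin 2) F) 0 1 = 0 ∧ (g : Matrix (Fin 2) (Fin 2) F) 1 0 = 0) ∨
    (a = -1 ∧ (g : Matrix (Fin 2) (Fin 2) F) 0 0 = 0 ∧ (g : Matrix (Fin 2) (Fin 2) F) 1 1 = 0) := by
  set M : Matrix (Fin 2) (Fin 2) F := (g : Matrix (Fin 2) (Fin 2) F) with hM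
  have e00 := congrFun (congrFun h 0) 0
  have e01 := congrFun (congrFun h 0) 1
  have e10 := congrFun (congrFun h 1) 0
  have e11 := congrFun (congrFun h 1) 1
  simp [Matrix.mul_apply, Matrix.vecMul, dotProduct, Fin.sum_univ_two, Matrix.smul_apply] at e00 e01 e10 e11
  by_cases ha : a = 1
  · subst ha
    left
    refine ⟨rfl, ?_, ?_⟩
    · have hh : (2:F) * M 0 1 = 0 := by first | linear_combination -e01 | linear_combination e01
      exact (mul_eq_zero.mp hh).resolve_left h2
    · have hh : (2:F) * M 1 0 = 0 := by first | linear_combination e10 | linear_combination -e10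
      exact (mul_eq_zero.mp hh).resolve_left h2
  by_cases ha' : a = -1
  · subst ha'
    right
    refine ⟨rfl, ?_, ?_⟩
    · have hh : (2:F) * M 0 0 = 0 := by first | linear_combination e00 | linear_combination -e00
      exact (mul_eq_zero.mp hh).resolve_left h2
    · have hh : (2:F) * M 1 1 = 0 := by first | linear_combination -e11 | linear_combination e11
      exact (mul_eq_zero.mp hh).resolve_left h2
  exfalso
  have h1a : (1:F) - a ≠ 0 := sub_ne_zero.mpr (fun hh => ha hh.symm)
  have h1a' : (1:F) + a ≠ 0 := fun hh => ha' (by linear_combination hh)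
  have h00 : M 0 0 = 0 := by
    have hh : ((1:F) - a) * M 0 0 = 0 := by first | linear_combination e00 | linear_combination -e00
    exact (mul_eq_zero.mp hh).resolve_left h1a
  have h11 : M 1 1 = 0 := by
    have hh : ((1:F) - a) * M 1 1 = 0 := by first | linear_combination -e11 | linear_combination e11
    exact (mul_eq_zero.mp hh).resolve_left h1a
  have h01 : M 0 1 = 0 := by
    have hh : ((1:F) + a) * M 0 1 = 0 := by first | linear_combination -e01 | linear_combination e01
    exact (mul_eq_zero.mp hh).resolve_left h1a'
  have h10 : M 1 0 = 0 := by
    have hh : ((1:F) + a) * M 1 0 = 0 := by first | linear_combination e10 | linear_combination -e10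
    exact (mul_eq_zero.mp hh).resolve_left h1a'
  have hdet : M.det = 0 := by
    rw [Matrix.det_fin_two, h00, h11, h01, h10]; ring
  exact (Matrix.isUnits_det_units g).ne_zero hdet

end Key

/-- The centralizer in `SO₄(F)` of `[(diag(1,-1), diag(1,-1))]` has cardinality `2(q-1)²`. -/
theorem centralizer_c3m1 (hq : Odd (Fintype.card F)) (p : GL22 F)
    (hp1 : (p.val.1 : Matrix (Fin 2) (Fin 2) F) = Matrix.diagonal ![1, -1])
    (hp2 : (p.val.2 : Matrix (Fin 2) (Fin 2) F) = Matrix.diagonal ![1, -1]) :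
    Nat.card ↥(Subgroup.centralizer {cls F p}) = 2 * (Fintype.card F - 1) ^ 2 := by
  classical
  have hF2 : (2:F) ≠ 0 := twoNeZero hq
  have hdiag : (Matrix.diagonal ![1, -1] : Matrix (Fin 2) (Fin 2) F) = !![1,0;0,-1] := by
    ext i j; fin_cases i <;> fin_cases j <;> simp [Matrix.diagonal]
  rw [hdiag] at hp1 hp2
  have hsc : ∀ a : Fˣ, (((scalarHom F a).val.1 : GL (Fin 2) F) : Matrix (Fin 2) (Fin 2) F)
      = (a:F) • (1 : Matrix (Fin 2) (Fin 2) F) := by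
    intro a
    show (Matrix.scalar (Fin 2)) (a:F) = _
    rw [Matrix.scalar_apply]
    ext i j
    by_cases hij : i = j <;> simp [Matrix.diagonal_apply, hij, Matrix.one_apply]
  have hsc2 : ∀ a : Fˣ, (((scalarHom F a).val.2 : GL (Fin 2) F) : Matrix (Fin 2) (Fin 2) F)
      = (a:F) • (1 : Matrix (Fin 2) (Fin 2) F) := hsc
  -- membership characterization
  have hmem : ∀ g : GL22 F,
      (QuotientGroup.mk g ∈ ((Subgroup.centralizer {cls F p} : Subgroup (SO4 F)) : Set (SO4 F))) ↔
      ∃ a : Fˣ, g * p = p * g * scalarHom F a := by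
    intro g
    rw [SetLike.mem_coe, Subgroup.mem_centralizer_iff]
    constructor
    · intro hg
      have h1 := hg (cls F p) rfl
      have h1' : (QuotientGroup.mk (p * g) : SO4 F) = QuotientGroup.mk (g * p) := h1
      rw [QuotientGroup.eq] at h1'
      obtain ⟨a, ha⟩ := h1'
      exact ⟨a, by rw [ha]; group⟩
    · rintro ⟨a, ha⟩ h hh
      rw [Set.mem_singleton_iff] at hh; subst hh
      show (QuotientGroup.mk (p * g) : SO4 F) = QuotientGroup.mk (g * p)
      rw [QuotientGroup.eq]
      exact ⟨a, by rw [ha]; group⟩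
  -- matrix characterization
  have hmat : ∀ (g : GL22 F) (a : Fˣ), g * p = p * g * scalarHom F a →
      ((g.val.1 : Matrix (Fin 2) (Fin 2) F) * !![1,0;0,-1]
          = (a:F) • (!![1,0;0,-1] * (g.val.1 : Matrix (Fin 2) (Fin 2) F)) ∧
       (g.val.2 : Matrix (Fin 2) (Fin 2) F) * !![1,0;0,-1]
          = (a:F) • (!![1,0;0,-1] * (g.val.2 : Matrix (Fin 2) (Fin 2) F))) := by
    intro g a h
    constructor
    · have hthis : (g.val.1 : Matrix (Fin 2) (Fin 2) F) * (p.val.1 : Matrix (Fin 2) (Fin 2) F)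
          = (p.val.1 : Matrix (Fin 2) (Fin 2) F) * (g.val.1 : Matrix (Fin 2) (Fin 2) F)
            * (((scalarHom F a).val.1 : GL (Fin 2) F) : Matrix (Fin 2) (Fin 2) F) :=
        congrArg (fun z : GL22 F => ((z.val.1 : GL (Fin 2) F) : Matrix (Fin 2) (Fin 2) F)) h
      rw [hp1, hsc a, mul_smul_comm, mul_one] at hthis
      exact hthis
    · have hthis : (g.val.2 : Matrix (Fin 2) (Fin 2) F) * (p.val.2 : Matrix (Fin 2) (Fin 2) F)
          = (p.val.2 : Matrix (Fin 2) (Fin 2) F) * (g.val.2 : Matrix (Fin 2) (Fin 2) F)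
            * (((scalarHom F a).val.2 : GL (Fin 2) F) : Matrix (Fin 2) (Fin 2) F) :=
        congrArg (fun z : GL22 F => ((z.val.2 : GL (Fin 2) F) : Matrix (Fin 2) (Fin 2) F)) h
      rw [hp2, hsc2 a, mul_smul_comm, mul_one] at hthis
      exact hthis
  have hne : (1:F) ≠ -1 := fun hh => hF2 (by linear_combination hh)
  -- set equality
  have hset : (QuotientGroup.mk ⁻¹'
        ((Subgroup.centralizer {cls F p} : Subgroup (SO4 F)) : Set (SO4 F)))
      = Set.range (ff (F:=F)) := by
    ext g
    rw [Set.mem_preimage, hmem g, Set.mem_range]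
    constructor
    · rintro ⟨a, ha⟩
      obtain ⟨hc1, hc2⟩ := hmat g a ha
      have hdeteq : (g.val.1 : Matrix (Fin 2) (Fin 2) F).det
          = (g.val.2 : Matrix (Fin 2) (Fin 2) F).det := by
        have hgp := g.property
        have : Matrix.GeneralLinearGroup.det (g.val.1) = Matrix.GeneralLinearGroup.det (g.val.2) := hgp
        calc (g.val.1 : Matrix (Fin 2) (Fin 2) F).det
            = ((Matrix.GeneralLinearGroup.det (g.val.1) : Fˣ) : F) :=
              (Matrix.GeneralLinearGroup.val_det_apply _).symm
          _ = ((Matrix.GeneralLinearGroup.det (g.val.2) : Fˣ) : F) := by rw [this]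
          _ = (g.val.2 : Matrix (Fin 2) (Fin 2) F).det :=
              Matrix.GeneralLinearGroup.val_det_apply _
      rcases key hF2 g.val.1 (a:F) hc1 with ⟨ha1, h01, h10⟩ | ⟨ham1, h00, h11⟩
      · rcases key hF2 g.val.2 (a:F) hc2 with ⟨_, k01, k10⟩ | ⟨ham1, k00, k11⟩
        swap
        · exact absurd (ha1.symm.trans ham1) hne
        set M := (g.val.1 : Matrix (Fin 2) (Fin 2) F) with hMdef
        set N := (g.val.2 : Matrix (Fin 2) (Fin 2) F) with hNdef
        have hdM : M.det = M 0 0 * M 1 1 := by rw [Matrix.det_fin_two, h01, h10]; ring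
        have hdN : N.det = N 0 0 * N 1 1 := by rw [Matrix.det_fin_two, k01, k10]; ring
        have hdetM : M.det ≠ 0 := (Matrix.isUnits_det_units g.val.1).ne_zero
        have hdetN : N.det ≠ 0 := (Matrix.isUnits_det_units g.val.2).ne_zero
        have hx : M 0 0 ≠ 0 := fun hh => hdetM (by rw [hdM, hh, zero_mul])
        have hy : M 1 1 ≠ 0 := fun hh => hdetM (by rw [hdM, hh, mul_zero])
        have hu : N 0 0 ≠ 0 := fun hh => hdetN (by rw [hdN, hh, zero_mul])
        refine ⟨.inl (Units.mk0 _ hx, Units.mk0 _ hy, Units.mk0 _ hu), ?_⟩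
        apply GL22_ext
        · show ((Dunit (Units.mk0 _ hx) (Units.mk0 _ hy) : GL (Fin 2) F)
              : Matrix (Fin 2) (Fin 2) F) = M
          rw [Dunit_coe]
          ext i j
          fin_cases i <;> fin_cases j <;> simp [h01, h10]
        · show ((Dunit (Units.mk0 _ hu)
                (Units.mk0 _ hx * Units.mk0 _ hy * (Units.mk0 _ hu)⁻¹) : GL (Fin 2) F)
              : Matrix (Fin 2) (Fin 2) F) = N
          rw [Dunit_coe]
          have hvv : M 0 0 * M 1 1 * (N 0 0)⁻¹ = N 1 1 := by
            rw [← hdM]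
            rw [hdeteq, hdN]
            field_simp
          ext i j
          fin_cases i <;> fin_cases j <;>
            simp [k01, k10, Units.val_mul, Units.val_inv_eq_inv_val, hvv]
      · rcases key hF2 g.val.2 (a:F) hc2 with ⟨ha1, k01, k10⟩ | ⟨_, k00, k11⟩
        · exact absurd (ha1.symm.trans ham1) hne
        set M := (g.val.1 : Matrix (Fin 2) (Fin 2) F) with hMdef
        set N := (g.val.2 : Matrix (Fin 2) (Fin 2) F) with hNdef
        have hdM : M.det = -(M 0 1 * M 1 0) := by rw [Matrix.det_fin_two, h00, h11]; ring
        have hdN : N.det = -(N 0 1 * N 1 0) := by rw [Matrix.det_fin_two, k00, k11]; ring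
        have hdetM : M.det ≠ 0 := (Matrix.isUnits_det_units g.val.1).ne_zero
        have hdetN : N.det ≠ 0 := (Matrix.isUnits_det_units g.val.2).ne_zero
        have hx : M 0 1 ≠ 0 := fun hh => hdetM (by rw [hdM, hh, zero_mul, neg_zero])
        have hy : M 1 0 ≠ 0 := fun hh => hdetM (by rw [hdM, hh, mul_zero, neg_zero])
        have hu : N 0 1 ≠ 0 := fun hh => hdetN (by rw [hdN, hh, zero_mul, neg_zero])
        refine ⟨.inr (Units.mk0 _ hx, Units.mk0 _ hy, Units.mk0 _ hu), ?_⟩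
        apply GL22_ext
        · show ((Aunit (Units.mk0 _ hx) (Units.mk0 _ hy) : GL (Fin 2) F)
              : Matrix (Fin 2) (Fin 2) F) = M
          rw [Aunit_coe]
          ext i j
          fin_cases i <;> fin_cases j <;> simp [h00, h11]
        · show ((Aunit (Units.mk0 _ hu)
                (Units.mk0 _ hx * Units.mk0 _ hy * (Units.mk0 _ hu)⁻¹) : GL (Fin 2) F)
              : Matrix (Fin 2) (Fin 2) F) = N
          rw [Aunit_coe]
          have hvv : M 0 1 * M 1 0 * (N 0 1)⁻¹ = N 1 0 := by
            have h' : M 0 1 * M 1 0 = N 0 1 * N 1 0 := by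
              have := hdeteq; rw [hdM, hdN] at this
              linear_combination -this
            rw [h']
            field_simp
          ext i j
          fin_cases i <;> fin_cases j <;>
            simp [k00, k11, Units.val_mul, Units.val_inv_eq_inv_val, hvv]
    · rintro ⟨w, rfl⟩
      rcases w with ⟨x,y,u⟩ | ⟨x,y,u⟩
      · refine ⟨1, ?_⟩
        rw [_root_.map_one, mul_one]
        apply GL22_ext
        · show !![(x:F),0;0,(y:F)] * (p.val.1 : Matrix (Fin 2) (Fin 2) F)
             = (p.val.1 : Matrix (Fin 2) (Fin 2) F) * !![(x:F),0;0,(y:F)]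
          rw [hp1, Matrix.mul_fin_two, Matrix.mul_fin_two]
          ext i j
          fin_cases i <;> fin_cases j <;> simp <;> ring
        · show !![(u:F),0;0,((x*y*u⁻¹:Fˣ):F)] * (p.val.2 : Matrix (Fin 2) (Fin 2) F)
             = (p.val.2 : Matrix (Fin 2) (Fin 2) F) * !![(u:F),0;0,((x*y*u⁻¹:Fˣ):F)]
          rw [hp2, Matrix.mul_fin_two, Matrix.mul_fin_two]
          ext i j
          fin_cases i <;> fin_cases j <;> simp <;> ring
      · refine ⟨-1, ?_⟩
        apply GL22_ext
        · show !![0,(x:F);(y:F),0] * (p.val.1 : Matrix (Fin 2) (Fin 2) F)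
             = (p.val.1 : Matrix (Fin 2) (Fin 2) F) * !![0,(x:F);(y:F),0]
               * (((scalarHom F (-1)).val.1 : GL (Fin 2) F) : Matrix (Fin 2) (Fin 2) F)
          rw [hp1, hsc (-1), mul_smul_comm, mul_one]
          ext i j
          fin_cases i <;> fin_cases j <;>
            simp [Matrix.mul_apply, Fin.sum_univ_two, Matrix.vecMul, dotProduct] <;> ring
        · show !![0,(u:F);((x*y*u⁻¹:Fˣ):F),0] * (p.val.2 : Matrix (Fin 2) (Fin 2) F)
             = (p.val.2 : Matrix (Fin 2) (Fin 2) F) * !![0,(u:F);((x*y*u⁻¹:Fˣ):F),0]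
               * (((scalarHom F (-1)).val.2 : GL (Fin 2) F) : Matrix (Fin 2) (Fin 2) F)
          rw [hp2, hsc2 (-1), mul_smul_comm, mul_one]
          ext i j
          fin_cases i <;> fin_cases j <;>
            simp [Matrix.mul_apply, Fin.sum_univ_two, Matrix.vecMul, dotProduct] <;> ring
  -- counting
  have hKcard : Nat.card ↥(scalarHom F).range = Fintype.card F - 1 := by
    have hinj : Function.Injective (scalarHom F) := by
      intro a b hab
      have h1 := congrArg (fun z : GL22 F => ((z.val.1 : GL (Fin 2) F) : Matrix (Fin 2) (Fin 2) F)) hab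
      rw [hsc a, hsc b] at h1
      have := congrFun (congrFun h1 0) 0
      simp [Matrix.smul_apply, Matrix.one_apply] at this
      exact Units.ext this
    rw [Nat.card_congr (MonoidHom.ofInjective hinj).toEquiv.symm]
    rw [Nat.card_eq_fintype_card, Fintype.card_units]
  have e := QuotientGroup.preimageMkEquivSubgroupProdSet (scalarHom F).range
      ((Subgroup.centralizer {cls F p} : Subgroup (SO4 F)) : Set (SO4 F))
  have hpre : Nat.card ↑(QuotientGroup.mk ⁻¹'
        ((Subgroup.centralizer {cls F p} : Subgroup (SO4 F)) : Set (SO4 F)))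
      = (Fintype.card F - 1) * Nat.card ↥(Subgroup.centralizer {cls F p}) := by
    rw [Nat.card_congr e, Nat.card_prod, hKcard]
    rfl
  have hrange : Nat.card ↑(Set.range (ff (F:=F)))
      = 2 * (Fintype.card F - 1)^3 := by
    rw [Nat.card_range_of_injective ff_inj, Nat.card_sum, Nat.card_prod, Nat.card_prod,
      Nat.card_eq_fintype_card, Fintype.card_units]
    ring
  rw [hset, hrange] at hpre
  have hpos : 0 < Fintype.card F - 1 := by
    have := Fintype.one_lt_card (α := F)
    omega
  apply Nat.eq_of_mul_eq_mul_left hpos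
  rw [← hpre]
  ring
end

section
/- Let A ∈ GL₂(F) with det A = 1 and with characteristic polynomial irreducible over F. The centralizer in SO₄(F) of the element [(I₂, A)] has cardinality q(q−1)(q+1)². -/
set_option linter.unusedSectionVars false

open Matrix

variable (F : Type*) [Field F] [Fintype F] [DecidableEq F]

open Polynomial in
section


lemma aux_charpoly_fin2 (M : Matrix (Fin 2) (Fin 2) F) :
    M.charpoly = X ^ 2 - C (M 0 0 + M 1 1) * X + C (M 0 0 * M 1 1 - M 0 1 * M 1 0) := by
  rw [Matrix.charpoly, Matrix.det_fin_two, Matrix.charmatrix_apply_eq,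
    Matrix.charmatrix_apply_eq, Matrix.charmatrix_apply_ne _ _ _ (by decide),
    Matrix.charmatrix_apply_ne _ _ _ (by decide)]
  simp only [Polynomial.C_add, Polynomial.C_mul, Polynomial.C_sub]
  ring

lemma aux_eval_ne (M : Matrix (Fin 2) (Fin 2) F) (hirr : Irreducible M.charpoly) (x : F) :
    M.charpoly.eval x ≠ 0 := by
  intro h
  obtain ⟨t, ht⟩ := (dvd_iff_isRoot (p := M.charpoly) (a := x)).2 h
  have hch : M.charpoly.natDegree = 2 := by
    rw [Matrix.charpoly_natDegree_eq_dim]; simp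
  rcases hirr.2 ht with hu | hu
  · exact Polynomial.not_isUnit_X_sub_C x hu
  · have ht0 : t ≠ 0 := by
      rintro rfl
      exact (Matrix.charpoly_monic M).ne_zero (by rw [ht, mul_zero])
    rw [ht, Polynomial.natDegree_mul (Polynomial.X_sub_C_ne_zero x) ht0,
      Polynomial.natDegree_X_sub_C, Polynomial.natDegree_eq_zero_of_isUnit hu] at hch
    omega

lemma aux_A10_ne (M : Matrix (Fin 2) (Fin 2) F) (hirr : Irreducible M.charpoly) :
    M 1 0 ≠ 0 := by
  intro h0
  have hfac : M.charpoly = (X - C (M 0 0)) * (X - C (M 1 1)) := by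
    rw [aux_charpoly_fin2, h0]
    simp only [mul_zero, sub_zero, Polynomial.C_add, Polynomial.C_mul]
    ring
  rcases hirr.2 hfac with hu | hu
  · exact Polynomial.not_isUnit_X_sub_C _ hu
  · exact Polynomial.not_isUnit_X_sub_C _ hu

lemma aux_det_ne (M : Matrix (Fin 2) (Fin 2) F) (hirr : Irreducible M.charpoly)
    (a b : F) (hab : ¬(a = 0 ∧ b = 0)) :
    (a • (1 : Matrix (Fin 2) (Fin 2) F) + b • M).det ≠ 0 := by
  have hD : (a • (1 : Matrix (Fin 2) (Fin 2) F) + b • M).det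
      = (a + b * M 0 0) * (a + b * M 1 1) - (b * M 0 1) * (b * M 1 0) := by
    simp [Matrix.det_fin_two, Matrix.add_apply, Matrix.smul_apply, Matrix.one_apply,
      smul_eq_mul]
  intro hdet
  rw [hD] at hdet
  by_cases hb : b = 0
  · subst hb
    have ha : a ≠ 0 := fun h => hab ⟨h, rfl⟩
    simp only [zero_mul, add_zero, mul_zero, sub_zero] at hdet
    exact ha (mul_self_eq_zero.1 hdet)
  · set x : F := -(a * b⁻¹) with hx
    have hbx : b * x = -a := by rw [hx]; field_simp
    have hE : M.charpoly.eval x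
        = x ^ 2 - (M 0 0 + M 1 1) * x + (M 0 0 * M 1 1 - M 0 1 * M 1 0) := by
      rw [aux_charpoly_fin2]; simp
    have key : b ^ 2 * M.charpoly.eval x
        = (a + b * M 0 0) * (a + b * M 1 1) - (b * M 0 1) * (b * M 1 0) := by
      rw [hE]
      linear_combination (b * x - a - (M 0 0 + M 1 1) * b) * hbx
    rw [hdet] at key
    exact aux_eval_ne F M hirr x ((mul_eq_zero.1 key).resolve_left (pow_ne_zero 2 hb))

lemma aux_commute_iff (M N : Matrix (Fin 2) (Fin 2) F) (hr : M 1 0 ≠ 0) :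
    M * N = N * M ↔ ∃ a b : F, N = a • (1 : Matrix (Fin 2) (Fin 2) F) + b • M := by
  constructor
  · intro h
    have e1 : M 0 0 * N 0 0 + M 0 1 * N 1 0 = N 0 0 * M 0 0 + N 0 1 * M 1 0 := by
      have := congrArg (fun X : Matrix (Fin 2) (Fin 2) F => X 0 0) h
      simpa [Matrix.mul_apply, Fin.sum_univ_two] using this
    have e2 : M 1 0 * N 0 0 + M 1 1 * N 1 0 = N 1 0 * M 0 0 + N 1 1 * M 1 0 := by
      have := congrArg (fun X : Matrix (Fin 2) (Fin 2) F => X 1 0) h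
      simpa [Matrix.mul_apply, Fin.sum_univ_two] using this
    have hinv : (M 1 0)⁻¹ * M 1 0 = 1 := inv_mul_cancel₀ hr
    refine ⟨N 0 0 - (N 1 0 * (M 1 0)⁻¹) * M 0 0, N 1 0 * (M 1 0)⁻¹, ?_⟩
    ext i j
    fin_cases i <;> fin_cases j <;>
      simp only [Fin.zero_eta, Fin.mk_one, Matrix.add_apply, Matrix.smul_apply,
        Matrix.one_apply_eq, Matrix.one_apply_ne (by decide : (0 : Fin 2) ≠ 1),
        Matrix.one_apply_ne (by decide : (1 : Fin 2) ≠ 0), smul_eq_mul]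
    · ring
    · linear_combination (-(M 1 0)⁻¹) * e1 - N 0 1 * hinv
    · linear_combination (-(N 1 0)) * hinv
    · linear_combination (-(M 1 0)⁻¹) * e2 + (N 0 0 - N 1 1) * hinv
  · rintro ⟨a, b, rfl⟩
    simp only [Matrix.mul_add, Matrix.add_mul, Matrix.mul_smul, Matrix.smul_mul,
      Matrix.mul_one, Matrix.one_mul]

lemma aux_card_commutant (A : GL (Fin 2) F)
    (hirr : Irreducible (Matrix.charpoly (A : Matrix (Fin 2) (Fin 2) F))) :
    Nat.card (Subgroup.centralizer ({A} : Set (GL (Fin 2) F))) =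
      Fintype.card F * Fintype.card F - 1 := by
  have hr : (A : Matrix (Fin 2) (Fin 2) F) 1 0 ≠ 0 := aux_A10_ne F _ hirr
  have hdet : ∀ x : {x : F × F // x ≠ 0},
      (x.1.1 • (1 : Matrix (Fin 2) (Fin 2) F) + x.1.2 • (A : Matrix (Fin 2) (Fin 2) F)).det ≠ 0 := by
    intro x
    refine aux_det_ne F _ hirr _ _ ?_
    rintro ⟨h1, h2⟩
    exact x.2 (Prod.ext h1 h2)
  set f : {x : F × F // x ≠ 0} → ↥(Subgroup.centralizer ({A} : Set (GL (Fin 2) F))) :=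
    fun x => ⟨Matrix.GeneralLinearGroup.mkOfDetNeZero _ (hdet x), by
      rw [Subgroup.mem_centralizer_singleton_iff]
      apply Units.ext
      show (x.1.1 • (1 : Matrix (Fin 2) (Fin 2) F) + x.1.2 • (A : Matrix (Fin 2) (Fin 2) F)) * A
          = A * (x.1.1 • (1 : Matrix (Fin 2) (Fin 2) F) + x.1.2 • (A : Matrix (Fin 2) (Fin 2) F))
      simp only [Matrix.mul_add, Matrix.add_mul, Matrix.mul_smul, Matrix.smul_mul,
        Matrix.mul_one, Matrix.one_mul]⟩ with hf
  have hbij : Function.Bijective f := by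
    constructor
    · intro x y hxy
      have hval : (x.1.1 • (1 : Matrix (Fin 2) (Fin 2) F) + x.1.2 • (A : Matrix (Fin 2) (Fin 2) F))
          = (y.1.1 • (1 : Matrix (Fin 2) (Fin 2) F) + y.1.2 • (A : Matrix (Fin 2) (Fin 2) F)) :=
        congrArg (fun z => Units.val z.val) hxy
      have h10 := congrArg (fun M : Matrix (Fin 2) (Fin 2) F => M 1 0) hval
      have h00 := congrArg (fun M : Matrix (Fin 2) (Fin 2) F => M 0 0) hval
      simp only [Matrix.add_apply, Matrix.smul_apply, Matrix.one_apply_eq,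
        Matrix.one_apply_ne (by decide : (1 : Fin 2) ≠ 0), smul_eq_mul, mul_zero,
        mul_one, zero_add] at h10 h00
      have hb : x.1.2 = y.1.2 := mul_right_cancel₀ hr h10
      have ha : x.1.1 = y.1.1 := by
        have := h00
        rw [hb] at this
        exact add_right_cancel this
      exact Subtype.ext (Prod.ext ha hb)
    · intro y
      have hcomm : (A : Matrix (Fin 2) (Fin 2) F) * (y.1 : Matrix (Fin 2) (Fin 2) F)
          = (y.1 : Matrix (Fin 2) (Fin 2) F) * (A : Matrix (Fin 2) (Fin 2) F) := by
        have := Subgroup.mem_centralizer_singleton_iff.1 y.2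
        exact congrArg Units.val this.symm
      obtain ⟨a, b, hab⟩ := (aux_commute_iff F _ _ hr).1 hcomm
      have hne : ((a, b) : F × F) ≠ 0 := by
        rintro h0
        have ha0 : a = 0 := congrArg Prod.fst h0
        have hb0 : b = 0 := congrArg Prod.snd h0
        rw [ha0, hb0, zero_smul, zero_smul, add_zero] at hab
        have := y.1.mul_inv
        rw [hab] at this
        have h01 := congrArg (fun M : Matrix (Fin 2) (Fin 2) F => M 0 0) this
        simp [Matrix.mul_apply] at h01
      refine ⟨⟨(a, b), hne⟩, ?_⟩
      apply Subtype.ext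
      apply Units.ext
      exact hab.symm
  have hcard := Nat.card_eq_of_bijective f hbij
  rw [← hcard, Nat.card_eq_fintype_card]
  have : Fintype.card {x : F × F // x ≠ 0} = Fintype.card (F × F) - 1 := by
    rw [Fintype.card_subtype_compl, Fintype.card_subtype_eq]
  rw [this, Fintype.card_prod]

end

section Helpers

lemma aux_det_GL_surj : Function.Surjective
    (Matrix.GeneralLinearGroup.det : GL (Fin 2) F →* Fˣ) := by
  intro u
  have hd : (Matrix.diagonal (fun i : Fin 2 => if i = 0 then (u : F) else 1)).det ≠ 0 := by
    simp [Matrix.det_diagonal, Fin.prod_univ_two]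
  refine ⟨Matrix.GeneralLinearGroup.mkOfDetNeZero _ hd, ?_⟩
  apply Units.ext
  show (Matrix.diagonal (fun i : Fin 2 => if i = 0 then (u : F) else 1)).det = (u : F)
  simp [Matrix.det_diagonal, Fin.prod_univ_two]

lemma aux_card_GL_fact :
    Nat.card (GL (Fin 2) F) =
      Nat.card Fˣ *
        Nat.card (MonoidHom.ker (Matrix.GeneralLinearGroup.det : GL (Fin 2) F →* Fˣ)) := by
  rw [Subgroup.card_eq_card_quotient_mul_card_subgroup
    (MonoidHom.ker (Matrix.GeneralLinearGroup.det : GL (Fin 2) F →* Fˣ))]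
  congr 1
  exact Nat.card_congr
    (QuotientGroup.quotientKerEquivOfSurjective _ (aux_det_GL_surj F)).toEquiv

lemma aux_sc_injective : Function.Injective (scalarHom F) := by
  intro a b h
  have h00 := congrArg (fun z : GL22 F => ((z.val.1 : Matrix (Fin 2) (Fin 2) F)) 0 0) h
  simp only [scalarHom, MonoidHom.coe_mk, OneHom.coe_mk, sc, Units.coe_map,
    RingHom.toMonoidHom_eq_coe, MonoidHom.coe_coe, Matrix.scalar_apply,
    Matrix.diagonal_apply_eq] at h00
  exact Units.ext h00

end Helpers

/-- For `A` of determinant one with irreducible characteristic polynomial, the centralizer in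
`SO₄(F)` of `[(I₂, A)]` has cardinality `q(q-1)(q+1)²`. -/
theorem centralizer_c1c4 (hq : Odd (Fintype.card F)) (A : GL (Fin 2) F)
    (hA : Matrix.det (A : Matrix (Fin 2) (Fin 2) F) = 1)
    (hAirr : Irreducible (Matrix.charpoly (A : Matrix (Fin 2) (Fin 2) F)))
    (p : GL22 F) (hp : p.val = (1, A)) :
    Nat.card ↥(Subgroup.centralizer {cls F p}) =
      Fintype.card F * (Fintype.card F - 1) * (Fintype.card F + 1) ^ 2 := by
  classical
  set q := Fintype.card F with hqdef
  set N := (scalarHom F).range with hNdef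
  set H' := Subgroup.centralizer {cls F p} with hH'def
  set H := Subgroup.comap (QuotientGroup.mk' N) H' with hHdef
  have hp1 : p.val.1 = 1 := by rw [hp]
  have hp2 : p.val.2 = A := by rw [hp]
  -- membership characterization for H
  have hmem : ∀ x : GL22 F, x ∈ H ↔ A * x.val.2 = x.val.2 * A := by
    intro x
    rw [hHdef, Subgroup.mem_comap, QuotientGroup.mk'_apply, hH'def,
      Subgroup.mem_centralizer_singleton_iff]
    have hcls : cls F p = (QuotientGroup.mk p : SO4 F) := rfl
    rw [hcls, ← QuotientGroup.mk_mul, ← QuotientGroup.mk_mul, QuotientGroup.eq]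
    constructor
    · rintro ⟨u, hu⟩
      have huval := congrArg (fun z : GL22 F => z.val) hu
      have hu1 : sc F u = (x.val.1 * p.val.1)⁻¹ * (p.val.1 * x.val.1) :=
        congrArg Prod.fst huval
      have hu2 : sc F u = (x.val.2 * p.val.2)⁻¹ * (p.val.2 * x.val.2) :=
        congrArg Prod.snd huval
      rw [hp1, mul_one, one_mul, inv_mul_cancel] at hu1
      have hu_one : u = 1 := by
        apply aux_sc_injective F
        rw [_root_.map_one]
        apply Subtype.ext
        apply Prod.ext <;> exact hu1
      rw [hu_one] at hu2
      have : sc F (1 : Fˣ) = 1 := by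
        have := _root_.map_one (scalarHom F)
        exact congrArg Prod.fst (congrArg (fun z : GL22 F => z.val) this)
      rw [this, hp2] at hu2
      have := inv_mul_eq_one.1 hu2.symm
      exact this.symm
    · intro hc
      refine ⟨1, ?_⟩
      have hxp : x * p = p * x := by
        apply Subtype.ext
        apply Prod.ext
        · show x.val.1 * p.val.1 = p.val.1 * x.val.1
          rw [hp1, mul_one, one_mul]
        · show x.val.2 * p.val.2 = p.val.2 * x.val.2
          rw [hp2]
          exact hc.symm
      rw [_root_.map_one, hxp, inv_mul_cancel]
  -- N ≤ H
  have hNH : N ≤ H := by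
    rintro n ⟨u, rfl⟩
    rw [hmem]
    show A * sc F u = sc F u * A
    apply Units.ext
    exact (Matrix.scalar_commute (u : F) (fun r => mul_comm _ _) _).symm
  -- the projection H →* H'
  set φ : ↥H →* ↥H' :=
    ((QuotientGroup.mk' N).domRestrict H).codRestrict H' (fun x => Subgroup.mem_comap.1 x.2)
    with hφdef
  have hφsurj : Function.Surjective φ := by
    rintro ⟨y, hy⟩
    obtain ⟨z, rfl⟩ := QuotientGroup.mk'_surjective N y
    exact ⟨⟨z, Subgroup.mem_comap.2 hy⟩, rfl⟩
  have hker : φ.ker = N.subgroupOf H := by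
    ext x
    rw [MonoidHom.mem_ker, Subgroup.mem_subgroupOf]
    have h1 : (φ x = 1) ↔ ((x.val : GL22 F) : SO4 F) = 1 := by
      rw [Subtype.ext_iff]; rfl
    rw [h1]
    exact QuotientGroup.eq_one_iff _
  have cardH : Nat.card ↥H = Nat.card ↥H' * Nat.card ↥N := by
    rw [Subgroup.card_eq_card_quotient_mul_card_subgroup φ.ker]
    congr 1
    · exact Nat.card_congr (QuotientGroup.quotientKerEquivOfSurjective φ hφsurj).toEquiv
    · rw [hker]
      exact Nat.card_congr (Subgroup.subgroupOfEquivOfLe hNH).toEquiv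
  -- H ≃ SL₂ × commutant
  set K := MonoidHom.ker (Matrix.GeneralLinearGroup.det : GL (Fin 2) F →* Fˣ) with hKdef
  set Zc := Subgroup.centralizer ({A} : Set (GL (Fin 2) F)) with hZcdef
  have e : ↥H ≃ ↥K × ↥Zc := by
    refine ⟨fun x => (⟨x.val.val.1 * (x.val.val.2)⁻¹, ?_⟩,
        ⟨x.val.val.2, ?_⟩),
      fun sh => ⟨⟨(sh.1.val * sh.2.val, sh.2.val), ?_⟩, ?_⟩, ?_, ?_⟩
    · have hd : Matrix.GeneralLinearGroup.det x.val.val.1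
          = Matrix.GeneralLinearGroup.det x.val.val.2 := x.val.2
      rw [MonoidHom.mem_ker, _root_.map_mul, map_inv, hd, mul_inv_cancel]
    · exact Subgroup.mem_centralizer_singleton_iff.2 ((hmem x.val).1 x.2).symm
    · show Matrix.GeneralLinearGroup.det (sh.1.val * sh.2.val)
        = Matrix.GeneralLinearGroup.det sh.2.val
      rw [_root_.map_mul, MonoidHom.mem_ker.mp sh.1.2, one_mul]
    · rw [hmem]
      exact (Subgroup.mem_centralizer_singleton_iff.1 sh.2.2).symm
    · intro x
      apply Subtype.ext
      apply Subtype.ext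
      exact Prod.ext (inv_mul_cancel_right _ _) rfl
    · intro sh
      exact Prod.ext (Subtype.ext (mul_inv_cancel_right _ _)) (Subtype.ext rfl)
  have cardHKZ : Nat.card ↥H = Nat.card ↥K * Nat.card ↥Zc := by
    rw [Nat.card_congr e, Nat.card_prod]
  -- numerics
  obtain ⟨r, hr⟩ : ∃ r : ℕ, q = r + 1 :=
    ⟨q - 1, by have : 1 ≤ q := Fintype.card_pos; omega⟩
  have hrpos : 1 ≤ r := by
    have : 2 ≤ q := Fintype.one_lt_card
    omega
  have cardN : Nat.card ↥N = r := by
    rw [hNdef, Nat.card_congr (MonoidHom.ofInjective (aux_sc_injective F)).toEquiv.symm,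
      Nat.card_eq_fintype_card, Fintype.card_units, ← hqdef, hr]
    omega
  have cardZc : Nat.card ↥Zc = r * (r + 2) := by
    rw [hZcdef, aux_card_commutant F A hAirr, ← hqdef, hr]
    have hq2 : (r + 1) * (r + 1) = r * (r + 2) + 1 := by ring
    rw [hq2, Nat.add_sub_cancel]
  have cardUnits : Nat.card Fˣ = r := by
    rw [Nat.card_eq_fintype_card, Fintype.card_units, ← hqdef, hr]
    omega
  have cardGL : Nat.card (GL (Fin 2) F) = (r * (r + 2)) * ((r + 1) * r) := by
    rw [Matrix.card_GL_field, ← hqdef]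
    rw [Fin.prod_univ_two]
    simp only [Fin.val_zero, Fin.val_one]
    have h3 : q ^ 2 - q ^ (0 : ℕ) = r * (r + 2) := by
      have : q ^ 2 = r * (r + 2) + 1 := by rw [hr]; ring
      rw [this, pow_zero, Nat.add_sub_cancel]
    have h4 : q ^ 2 - q ^ (1 : ℕ) = (r + 1) * r := by
      have : q ^ 2 = (r + 1) * r + q := by rw [hr]; ring
      rw [this, pow_one, Nat.add_sub_cancel]
    rw [h3, h4]
  have cardK : Nat.card ↥K = (r + 2) * ((r + 1) * r) := by
    have h5 := aux_card_GL_fact F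
    rw [cardGL, cardUnits, ← hKdef] at h5
    have h6 : r * ((r + 2) * ((r + 1) * r)) = (r * (r + 2)) * ((r + 1) * r) := by ring
    rw [← h6] at h5
    exact (Nat.eq_of_mul_eq_mul_left (by omega) h5.symm)
  -- final computation
  have hfinal : Nat.card ↥H' * r = ((r + 1) * r * (r + 2) ^ 2) * r := by
    have := cardH
    rw [cardN, cardHKZ, cardK, cardZc] at this
    rw [← this]
    ring
  have hH'card : Nat.card ↥H' = (r + 1) * r * (r + 2) ^ 2 :=
    Nat.eq_of_mul_eq_mul_right (by omega) hfinal
  rw [hH'card, hr, Nat.add_sub_cancel]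
end

section
/- Let A, B ∈ GL₂(F) with det A = det B, with the characteristic polynomials of both A and B irreducible over F, and with trace of A nonzero. The centralizer in SO₄(F) of the element [(A, B)] is a commutative group of cardinality (q+1)². -/
set_option linter.unusedSectionVars false

open Matrix

variable (F : Type*) [Field F] [Fintype F] [DecidableEq F]

/-! ### Auxiliary lemmas -/

section Aux

open Polynomial

variable {K : Type*} [Field K] [Fintype K] [DecidableEq K]

lemma eval_charpoly_fin_two (M : Matrix (Fin 2) (Fin 2) K) (c : K) :
    (Matrix.charpoly M).eval c = (c - M 0 0) * (c - M 1 1) - M 0 1 * M 1 0 := by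
  rw [Matrix.charpoly, Matrix.det_fin_two]
  simp [Matrix.charmatrix_apply_eq, Matrix.charmatrix_apply_ne, Matrix.charmatrix_apply]

lemma no_root {M : Matrix (Fin 2) (Fin 2) K} (h : Irreducible M.charpoly) (c : K) :
    (Matrix.charpoly M).eval c ≠ 0 := by
  intro hc
  obtain ⟨b, hb⟩ := Polynomial.dvd_iff_isRoot.mpr hc
  rcases h.isUnit_or_isUnit hb with h1 | h1
  · exact (Polynomial.not_isUnit_X_sub_C c) h1
  · have h2 : (M.charpoly).natDegree = 2 := by
      simpa using M.charpoly_natDegree_eq_dim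
    have hb0 : b ≠ 0 := h1.ne_zero
    have h3 : (M.charpoly).natDegree = 1 := by
      rw [hb, Polynomial.natDegree_mul (Polynomial.X_sub_C_ne_zero c) hb0,
        Polynomial.natDegree_eq_zero_of_isUnit h1, Polynomial.natDegree_X_sub_C]
    omega

lemma offdiag_ne {M : Matrix (Fin 2) (Fin 2) K} (h : Irreducible M.charpoly) :
    M 0 1 ≠ 0 := by
  have := no_root h (M 0 0)
  rw [eval_charpoly_fin_two] at this
  intro h01
  simp [h01] at this

lemma det_combo (M : Matrix (Fin 2) (Fin 2) K) (a b : K) :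
    (a • (1 : Matrix (Fin 2) (Fin 2) K) + b • M).det
      = a^2 + a*b*(M 0 0 + M 1 1) + b^2 * (M 0 0 * M 1 1 - M 0 1 * M 1 0) := by
  simp [Matrix.det_fin_two, Matrix.add_apply, Matrix.smul_apply, Matrix.one_apply]
  ring

lemma combo_det_ne {M : Matrix (Fin 2) (Fin 2) K} (hirr : Irreducible M.charpoly)
    {a b : K} (h : ¬(a = 0 ∧ b = 0)) :
    (a • (1 : Matrix (Fin 2) (Fin 2) K) + b • M).det ≠ 0 := by
  rw [det_combo]
  rcases eq_or_ne b 0 with hb | hb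
  · have ha : a ≠ 0 := fun ha => h ⟨ha, hb⟩
    simp [hb]
    exact ha
  · intro h0
    apply no_root hirr (-a/b)
    rw [eval_charpoly_fin_two]
    field_simp
    linear_combination h0

lemma commutant {M : Matrix (Fin 2) (Fin 2) K}
    (h01 : M 0 1 ≠ 0) {N : Matrix (Fin 2) (Fin 2) K} (hc : N * M = M * N) :
    ∃ a b : K, N = a • (1 : Matrix (Fin 2) (Fin 2) K) + b • M := by
  refine ⟨N 0 0 - (N 0 1 / M 0 1) * M 0 0, N 0 1 / M 0 1, ?_⟩
  have e00 := congrFun (congrFun hc 0) 0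
  have e01 := congrFun (congrFun hc 0) 1
  simp [Matrix.mul_apply, Fin.sum_univ_two] at e00 e01
  ext i j
  fin_cases i <;> fin_cases j <;>
    simp [Matrix.add_apply, Matrix.smul_apply, Matrix.one_apply]
  · field_simp
  · field_simp
    linear_combination -e00
  · field_simp
    linear_combination -e01

lemma combo_inj {M : Matrix (Fin 2) (Fin 2) K} (h01 : M 0 1 ≠ 0) {a b a' b' : K}
    (h : a • (1 : Matrix (Fin 2) (Fin 2) K) + b • M = a' • 1 + b' • M) : a = a' ∧ b = b' := by
  have e01 := congrFun (congrFun h 0) 1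
  have e00 := congrFun (congrFun h 0) 0
  simp [Matrix.add_apply, Matrix.smul_apply, Matrix.one_apply] at e01 e00
  have hb : b = b' := e01.resolve_right h01
  subst hb
  exact ⟨add_right_cancel e00, rfl⟩

lemma commutant_comm {M N P : Matrix (Fin 2) (Fin 2) K} (h01 : M 0 1 ≠ 0)
    (hN : N * M = M * N) (hP : P * M = M * P) : N * P = P * N := by
  obtain ⟨a, b, rfl⟩ := commutant h01 hN
  obtain ⟨c, d, rfl⟩ := commutant h01 hP
  simp only [add_mul, mul_add, smul_mul_assoc, mul_smul_comm, one_mul, mul_one, smul_smul]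
  module

/-- the centralizer of a GL element -/
noncomputable abbrev Zc (U : GL (Fin 2) K) : Subgroup (GL (Fin 2) K) :=
  Subgroup.centralizer {U}

lemma mem_Zc_iff {U g : GL (Fin 2) K} :
    g ∈ Zc U ↔ (g : Matrix (Fin 2) (Fin 2) K) * U = U * g := by
  rw [Subgroup.mem_centralizer_singleton_iff, Units.ext_iff, Units.val_mul, Units.val_mul]

/-- the unit given by a nonzero combination `a•1 + b•U` -/
noncomputable def comboGL (U : GL (Fin 2) K)
    (hirr : Irreducible (U : Matrix (Fin 2) (Fin 2) K).charpoly)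
    (v : {v : K × K // v ≠ 0}) : GL (Fin 2) K :=
  ((Matrix.isUnit_iff_isUnit_det _).mpr
    (Ne.isUnit (combo_det_ne hirr (fun h => v.2 (Prod.ext h.1 h.2))))).unit

lemma comboGL_val (U : GL (Fin 2) K) (hirr) (v : {v : K × K // v ≠ 0}) :
    (comboGL U hirr v : Matrix (Fin 2) (Fin 2) K)
      = v.1.1 • (1 : Matrix (Fin 2) (Fin 2) K) + v.1.2 • (U : Matrix (Fin 2) (Fin 2) K) :=
  IsUnit.unit_spec _

lemma comboGL_mem (U : GL (Fin 2) K) (hirr) (v : {v : K × K // v ≠ 0}) :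
    comboGL U hirr v ∈ Zc U := by
  rw [mem_Zc_iff, comboGL_val]
  noncomm_ring

lemma comboGL_bij (U : GL (Fin 2) K)
    (hirr : Irreducible (U : Matrix (Fin 2) (Fin 2) K).charpoly) :
    Function.Bijective (fun v : {v : K × K // v ≠ 0} =>
      (⟨comboGL U hirr v, comboGL_mem U hirr v⟩ : Zc U)) := by
  constructor
  · intro v w h
    have h2 : (comboGL U hirr v : Matrix (Fin 2) (Fin 2) K) = comboGL U hirr w := by
      rw [Subtype.ext_iff] at h
      exact congrArg Units.val h
    rw [comboGL_val, comboGL_val] at h2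
    obtain ⟨h3, h4⟩ := combo_inj (offdiag_ne hirr) h2
    exact Subtype.ext (Prod.ext h3 h4)
  · rintro ⟨g, hg⟩
    rw [mem_Zc_iff] at hg
    obtain ⟨a, b, hab⟩ := commutant (offdiag_ne hirr) hg
    have hv : (a, b) ≠ (0 : K × K) := by
      rintro h0
      rw [Prod.mk_eq_zero] at h0
      obtain ⟨rfl, rfl⟩ := h0
      rw [zero_smul, zero_smul, add_zero] at hab
      have hdet : IsUnit (g : Matrix (Fin 2) (Fin 2) K).det :=
        (Matrix.isUnit_iff_isUnit_det _).mp g.isUnit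
      rw [hab, Matrix.det_zero] at hdet
      exact (not_isUnit_zero : ¬ IsUnit (0:K)) hdet
    refine ⟨⟨(a, b), hv⟩, ?_⟩
    apply Subtype.ext
    apply Units.ext
    rw [comboGL_val]
    exact hab.symm

lemma card_Zc (U : GL (Fin 2) K)
    (hirr : Irreducible (U : Matrix (Fin 2) (Fin 2) K).charpoly) :
    Nat.card (Zc U) = Fintype.card K ^ 2 - 1 := by
  rw [← Nat.card_eq_of_bijective _ (comboGL_bij U hirr)]
  simp [Nat.card_eq_fintype_card]
  rw [pow_two]

lemma ringChar_ne_two' (hq : Odd (Fintype.card K)) : ringChar K ≠ 2 := by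
  intro h
  have h1 := FiniteField.even_card_of_char_two h
  have h2 := Nat.odd_iff.mp hq
  omega

lemma nonsq_mul' (hch : ringChar K ≠ 2) {a b : Kˣ} (ha : ¬IsSquare a) (hb : ¬IsSquare b) :
    IsSquare (a * b) := by
  have hda := (FiniteField.pow_dichotomy hch a.ne_zero).resolve_left (by
    intro h
    exact ha ((FiniteField.unit_isSquare_iff hch a).mpr (Units.ext (by
      rw [Units.val_pow_eq_pow_val, h, Units.val_one]))))
  have hdb := (FiniteField.pow_dichotomy hch b.ne_zero).resolve_left (by
    intro h
    exact hb ((FiniteField.unit_isSquare_iff hch b).mpr (Units.ext (by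
      rw [Units.val_pow_eq_pow_val, h, Units.val_one]))))
  rw [FiniteField.unit_isSquare_iff hch]
  apply Units.ext
  rw [Units.val_pow_eq_pow_val, Units.val_mul, mul_pow, hda, hdb, Units.val_one]
  ring

lemma subgroup_sq_top {S : Subgroup Kˣ} (hch : ringChar K ≠ 2)
    (hsq : ∀ u : Kˣ, u ^ 2 ∈ S) {s : Kˣ} (hs : s ∈ S) (hns : ¬IsSquare s) : S = ⊤ := by
  ext x
  simp only [Subgroup.mem_top, iff_true]
  by_cases hx : IsSquare x
  · obtain ⟨y, rfl⟩ := hx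
    have := hsq y
    rwa [pow_two] at this
  · have hsi : ¬IsSquare s⁻¹ := fun h => hns (isSquare_inv.mp h)
    obtain ⟨y, hy⟩ := nonsq_mul' hch hsi hx
    have hx' : x = s * (y * y) := by
      rw [← hy, mul_inv_cancel_left]
    rw [hx']
    exact S.mul_mem hs (by have := hsq y; rwa [pow_two] at this)

/-- determinant homomorphism on the centralizer -/
noncomputable def dh (U : GL (Fin 2) K) : Zc U →* Kˣ :=
  (Matrix.GeneralLinearGroup.det).comp (Zc U).subtype

lemma sc_mem_Zc (U : GL (Fin 2) K) (u : Kˣ) :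
    (Units.map (Matrix.scalar (Fin 2)).toMonoidHom u : GL (Fin 2) K) ∈ Zc U := by
  rw [mem_Zc_iff]
  exact Matrix.scalar_commute (u : K) (fun r => mul_comm _ _) _

lemma dh_sc (U : GL (Fin 2) K) (u : Kˣ) :
    dh U ⟨_, sc_mem_Zc U u⟩ = u ^ 2 := by
  apply Units.ext
  simp [dh, Matrix.GeneralLinearGroup.val_det_apply, Matrix.scalar_apply,
    Matrix.det_diagonal, Fin.prod_univ_two, pow_two]

lemma dh_eval (U : GL (Fin 2) K)
    (hirr : Irreducible (U : Matrix (Fin 2) (Fin 2) K).charpoly) (c : K) :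
    ∃ z : Zc U, ((dh U z : Kˣ) : K) = (U : Matrix (Fin 2) (Fin 2) K).charpoly.eval c := by
  have hv : ((-c, 1) : K × K) ≠ 0 := by
    intro h
    rw [Prod.mk_eq_zero] at h
    exact one_ne_zero h.2
  refine ⟨⟨comboGL U hirr ⟨(-c, 1), hv⟩, comboGL_mem U hirr _⟩, ?_⟩
  have : ((dh U ⟨comboGL U hirr ⟨(-c, 1), hv⟩, comboGL_mem U hirr _⟩ : Kˣ) : K)
      = (comboGL U hirr ⟨(-c, 1), hv⟩ : Matrix (Fin 2) (Fin 2) K).det := by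
    simp [dh, Matrix.GeneralLinearGroup.val_det_apply]
  rw [this, comboGL_val, det_combo, eval_charpoly_fin_two]
  ring

lemma dh_surj (U : GL (Fin 2) K)
    (hirr : Irreducible (U : Matrix (Fin 2) (Fin 2) K).charpoly)
    (hq : Odd (Fintype.card K)) : Function.Surjective (dh U) := by
  have hch := ringChar_ne_two' (K := K) hq
  rw [← MonoidHom.range_eq_top]
  by_contra hne
  have hsq2 : ∀ u : Kˣ, u ^ 2 ∈ (dh U).range := fun u => ⟨⟨_, sc_mem_Zc U u⟩, dh_sc U u⟩
  have hall : ∀ s ∈ (dh U).range, IsSquare s := by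
    intro s hs
    by_contra hns
    exact hne (subgroup_sq_top hch hsq2 hs hns)
  set M := (U : Matrix (Fin 2) (Fin 2) K) with hM
  set f : K → K := fun c => M.charpoly.eval c with hf
  set T := Finset.image f Finset.univ with hT
  have hfib : ∀ a ∈ Finset.univ.image f, (Finset.univ.filter fun x => f x = a).card ≤ 2 := by
    intro a ha
    obtain ⟨c₀, _, hc₀⟩ := Finset.mem_image.mp ha
    refine le_trans (Finset.card_le_card (fun x hx => ?_))
      ((Finset.card_insert_le c₀ {M 0 0 + M 1 1 - c₀}).trans (by simp))
    rw [Finset.mem_filter] at hx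
    have h1 : f x = f c₀ := by rw [hx.2, hc₀]
    have h2 : (x - c₀) * (x + c₀ - (M 0 0 + M 1 1)) = 0 := by
      rw [hf] at h1
      simp only [eval_charpoly_fin_two] at h1
      linear_combination h1
    rcases mul_eq_zero.mp h2 with h | h
    · exact Finset.mem_insert.mpr (Or.inl (sub_eq_zero.mp h))
    · refine Finset.mem_insert.mpr (Or.inr (Finset.mem_singleton.mpr ?_))
      linear_combination h
  have hTcard : Fintype.card K ≤ 2 * T.card := by
    have := Finset.card_le_mul_card_image (f := f) Finset.univ 2 hfib
    simpa using this
  set g : Kˣ → K := fun y => (y : K) * (y : K) with hg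
  set SQ := Finset.image g Finset.univ with hSQ
  have hTsub : T ⊆ SQ := by
    intro a haT
    obtain ⟨c, _, hc⟩ := Finset.mem_image.mp haT
    obtain ⟨z, hz⟩ := dh_eval U hirr c
    obtain ⟨y, hy⟩ := hall (dh U z) ⟨z, rfl⟩
    refine Finset.mem_image.mpr ⟨y, Finset.mem_univ _, ?_⟩
    have h3 : ((dh U z : Kˣ) : K) = (y : K) * (y : K) := by
      rw [hy]; simp
    show (y : K) * (y : K) = a
    rw [← h3, hz, ← hc]
  have hSQcard : 2 * SQ.card ≤ Fintype.card Kˣ := by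
    have h2 : ∀ a ∈ SQ, 2 ≤ (Finset.univ.filter fun y : Kˣ => g y = a).card := by
      intro a ha
      obtain ⟨y, _, hy⟩ := Finset.mem_image.mp ha
      have hyne : y ≠ -y := by
        intro h
        have hvy : (y : K) = -(y : K) := by
          conv_lhs => rw [h]
          rw [Units.val_neg]
        have h2y : (2 : K) * (y : K) = 0 := by linear_combination hvy
        rcases mul_eq_zero.mp h2y with h' | h'
        · exact Ring.two_ne_zero hch h'
        · exact y.ne_zero h'
      have hsub : ({y, -y} : Finset Kˣ) ⊆ Finset.univ.filter fun x => g x = a := by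
        intro x hx
        rcases Finset.mem_insert.mp hx with rfl | hx
        · exact Finset.mem_filter.mpr ⟨Finset.mem_univ _, hy⟩
        · rw [Finset.mem_singleton.mp hx]
          refine Finset.mem_filter.mpr ⟨Finset.mem_univ _, ?_⟩
          rw [hg]
          simp only [Units.val_neg, neg_mul_neg]
          exact hy
      calc 2 = ({y, -y} : Finset Kˣ).card := by
                rw [Finset.card_insert_of_notMem (by simpa using hyne), Finset.card_singleton]
        _ ≤ _ := Finset.card_le_card hsub
    exact Finset.mul_card_image_le_card_of_maps_to
      (fun a _ => Finset.mem_image_of_mem g (Finset.mem_univ a)) 2 h2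
  have hunits : Fintype.card Kˣ = Fintype.card K - 1 := Fintype.card_units (α := K)
  have hpos : 1 ≤ Fintype.card K := Fintype.card_pos
  have := Finset.card_le_card hTsub
  omega

/-- the determinant-ratio homomorphism on the product of centralizers -/
noncomputable def chi (A B : GL (Fin 2) K) : ((Zc A).prod (Zc B)) →* Kˣ where
  toFun w := Matrix.GeneralLinearGroup.det w.1.1 * (Matrix.GeneralLinearGroup.det w.1.2)⁻¹
  map_one' := by simp
  map_mul' x y := by
    simp only [Subgroup.coe_mul, Prod.fst_mul, Prod.snd_mul, _root_.map_mul, mul_inv]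
    exact mul_mul_mul_comm _ _ _ _

end Aux

section Main

variable {F}

lemma sc_val (u : Fˣ) : (sc F u : Matrix (Fin 2) (Fin 2) F) = (u : F) • 1 := by
  rw [sc]
  show Matrix.scalar (Fin 2) (u : F) = _
  rw [Matrix.scalar_apply, Matrix.smul_one_eq_diagonal]

lemma memD_iff (A B : GL (Fin 2) F)
    (htr : Matrix.trace (A : Matrix (Fin 2) (Fin 2) F) ≠ 0)
    (p : GL22 F) (hp : p.val = (A, B)) (x : GL22 F) :
    cls F x ∈ Subgroup.centralizer {cls F p} ↔ x ∈ Subgroup.centralizer {p} := by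
  rw [Subgroup.mem_centralizer_singleton_iff, Subgroup.mem_centralizer_singleton_iff]
  constructor
  · intro h
    have h2 : cls F (x * p) = cls F (p * x) := by
      show QuotientGroup.mk _ = QuotientGroup.mk _
      rw [QuotientGroup.mk_mul, QuotientGroup.mk_mul]
      exact h
    rw [cls, QuotientGroup.eq] at h2
    obtain ⟨u, hu⟩ := h2
    have hu2 : x * p * scalarHom F u = p * x := by
      rw [hu, mul_inv_cancel_left]
    have hval := congrArg (fun z : GL22 F => (z.val).1) hu2
    simp only [Subgroup.coe_mul, Prod.fst_mul, hp] at hval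
    have hval1 : x.val.1 * A * sc F u = A * x.val.1 := hval
    have e2 := congrArg Units.val hval1
    simp only [Units.val_mul] at e2
    rw [sc_val] at e2
    set G := (x.val.1 : Matrix (Fin 2) (Fin 2) F)
    set A' := (A : Matrix (Fin 2) (Fin 2) F)
    set Gi := ((x.val.1⁻¹ : GL (Fin 2) F) : Matrix (Fin 2) (Fin 2) F)
    have hGGi : G * Gi = 1 := x.val.1.mul_inv
    have hGiG : Gi * G = 1 := x.val.1.inv_mul
    have e3 : (u : F) • (G * A') = A' * G := by
      rw [← e2, mul_smul_comm, mul_one]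
    have e4 : A' = (u : F) • (G * (A' * Gi)) := by
      calc A' = A' * (G * Gi) := by rw [hGGi, mul_one]
        _ = (A' * G) * Gi := by rw [mul_assoc]
        _ = ((u : F) • (G * A')) * Gi := by rw [e3]
        _ = (u : F) • (G * (A' * Gi)) := by rw [smul_mul_assoc, mul_assoc]
    have e5 : Matrix.trace A' = (u : F) * Matrix.trace A' := by
      conv_lhs => rw [e4]
      rw [Matrix.trace_smul, smul_eq_mul, Matrix.trace_mul_comm, mul_assoc, hGiG, mul_one]
    have hu1 : (u : F) = 1 := by
      have : ((u : F) - 1) * Matrix.trace A' = 0 := by linear_combination -e5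
      rcases mul_eq_zero.mp this with h' | h'
      · linear_combination h'
      · exact absurd h' htr
    have : u = 1 := Units.ext hu1
    rw [this, _root_.map_one, mul_one] at hu2
    exact hu2
  · intro h
    show QuotientGroup.mk _ * QuotientGroup.mk _ = _
    rw [← QuotientGroup.mk_mul, h, QuotientGroup.mk_mul]
    rfl

end Main

/-- For `A, B` with equal determinants, irreducible characteristic polynomials, and
`trace A ≠ 0`, the centralizer in `SO₄(F)` of `[(A, B)]` is a commutative group of
cardinality `(q+1)²`. -/
theorem centralizer_c4c4 (hq : Odd (Fintype.card F)) (A B : GL (Fin 2) F)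
    (hdet : Matrix.det (A : Matrix (Fin 2) (Fin 2) F) =
      Matrix.det (B : Matrix (Fin 2) (Fin 2) F))
    (hAirr : Irreducible (Matrix.charpoly (A : Matrix (Fin 2) (Fin 2) F)))
    (hBirr : Irreducible (Matrix.charpoly (B : Matrix (Fin 2) (Fin 2) F)))
    (htr : Matrix.trace (A : Matrix (Fin 2) (Fin 2) F) ≠ 0)
    (p : GL22 F) (hp : p.val = (A, B)) :
    Nat.card ↥(Subgroup.centralizer {cls F p}) = (Fintype.card F + 1) ^ 2 ∧
    ∀ a b : SO4 F, a ∈ Subgroup.centralizer {cls F p} →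
      b ∈ Subgroup.centralizer {cls F p} → a * b = b * a := by
  classical
  set q := Fintype.card F with hqdef
  -- the centralizer of p in GL22
  set Dg : Subgroup (GL22 F) := Subgroup.centralizer {p} with hDgdef
  -- commutation of components for elements of Dg
  have hcompD : ∀ x : GL22 F, x ∈ Dg →
      (x.val.1 * A = A * x.val.1) ∧ (x.val.2 * B = B * x.val.2) := by
    intro x hx
    have hx2 := Subgroup.mem_centralizer_singleton_iff.mp hx
    have h1 := congrArg (fun z : GL22 F => (z.val).1) hx2
    have h2 := congrArg (fun z : GL22 F => (z.val).2) hx2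
    simp only [Subgroup.coe_mul, Prod.fst_mul, Prod.snd_mul, hp] at h1 h2
    exact ⟨h1, h2⟩
  have hcompD' : ∀ x : GL22 F,
      (x.val.1 * A = A * x.val.1) → (x.val.2 * B = B * x.val.2) → x ∈ Dg := by
    intro x h1 h2
    rw [hDgdef, Subgroup.mem_centralizer_singleton_iff]
    apply Subtype.ext
    apply Prod.ext
    · simpa [hp] using h1
    · simpa [hp] using h2
  -- the quotient map restricted to Dg
  set f : Dg →* SO4 F := (QuotientGroup.mk' (scalarHom F).range).comp Dg.subtype with hfdef
  have hrange : f.range = Subgroup.centralizer {cls F p} := by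
    ext z
    constructor
    · rintro ⟨x, rfl⟩
      exact (memD_iff A B htr p hp x.val).mpr x.2
    · intro hz
      obtain ⟨x, rfl⟩ := QuotientGroup.mk'_surjective (scalarHom F).range z
      have hx : x ∈ Dg := (memD_iff A B htr p hp x).mp hz
      exact ⟨⟨x, hx⟩, rfl⟩
  -- kernel of f is the scalars
  have hmemDsc : ∀ a : Fˣ, scalarHom F a ∈ Dg := by
    intro a
    apply hcompD'
    · apply Units.ext
      simp only [Units.val_mul]
      exact Matrix.scalar_commute (a : F) (fun r => mul_comm _ _) _
    · apply Units.ext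
      simp only [Units.val_mul]
      exact Matrix.scalar_commute (a : F) (fun r => mul_comm _ _) _
  have hkerelt : ∀ a : Fˣ, (⟨scalarHom F a, hmemDsc a⟩ : Dg) ∈ MonoidHom.ker f := by
    intro a
    show QuotientGroup.mk (scalarHom F a) = 1
    rw [QuotientGroup.eq_one_iff]
    exact ⟨a, rfl⟩
  have hkerbij : Function.Bijective
      (fun a : Fˣ => (⟨⟨scalarHom F a, hmemDsc a⟩, hkerelt a⟩ : MonoidHom.ker f)) := by
    constructor
    · intro a b hab
      rw [Subtype.ext_iff, Subtype.ext_iff] at hab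
      have h1 : sc F a = sc F b := congrArg (fun z : GL22 F => z.val.1) hab
      have h2 : Matrix.scalar (Fin 2) (a : F) = Matrix.scalar (Fin 2) (b : F) :=
        congrArg Units.val h1
      exact Units.ext (Matrix.scalar_inj.mp h2)
    · rintro ⟨⟨x, hxD⟩, hxk⟩
      have hx1 : QuotientGroup.mk x = (1 : SO4 F) := hxk
      rw [QuotientGroup.eq_one_iff] at hx1
      obtain ⟨a, ha⟩ := hx1
      exact ⟨a, by apply Subtype.ext; apply Subtype.ext; exact ha⟩
  have hkercard : Nat.card (MonoidHom.ker f) = q - 1 := by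
    rw [← Nat.card_eq_of_bijective _ hkerbij, Nat.card_eq_fintype_card,
      Fintype.card_units (α := F)]
  -- card Dg = card Zg * (q - 1)
  have hcardD : Nat.card Dg = Nat.card (Subgroup.centralizer {cls F p}) * (q - 1) := by
    rw [Subgroup.card_eq_card_quotient_mul_card_subgroup (MonoidHom.ker f), hkercard]
    congr 1
    rw [Nat.card_congr (QuotientGroup.quotientKerEquivRange f).toEquiv, hrange]
  -- the fiber product group
  have hchisurj : Function.Surjective (chi A B) := by
    intro u
    obtain ⟨z, hz⟩ := dh_surj A hAirr hq u
    refine ⟨⟨((z : GL (Fin 2) F), 1), Subgroup.mem_prod.mpr ⟨z.2, Subgroup.one_mem _⟩⟩, ?_⟩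
    show Matrix.GeneralLinearGroup.det (z : GL (Fin 2) F) * _ = u
    have : Matrix.GeneralLinearGroup.det (z : GL (Fin 2) F) = u := hz
    rw [this, _root_.map_one, inv_one, mul_one]
  -- ker chi ≃ Dg
  have hkerchiD : Nat.card (MonoidHom.ker (chi A B)) = Nat.card Dg := by
    apply Nat.card_congr
    refine ⟨fun w => ⟨⟨w.1.1, ?_⟩, ?_⟩, fun x => ⟨⟨x.1.1, ?_⟩, ?_⟩, ?_, ?_⟩
    · -- GL22 membership
      have hw : Matrix.GeneralLinearGroup.det w.1.1.1
          * (Matrix.GeneralLinearGroup.det w.1.1.2)⁻¹ = 1 := w.2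
      exact mul_inv_eq_one.mp hw
    · -- Dg membership
      apply hcompD'
      · have := Subgroup.mem_centralizer_singleton_iff.mp (Subgroup.mem_prod.mp w.1.2).1
        exact this
      · have := Subgroup.mem_centralizer_singleton_iff.mp (Subgroup.mem_prod.mp w.1.2).2
        exact this
    · -- prod membership
      refine Subgroup.mem_prod.mpr ⟨?_, ?_⟩
      · exact Subgroup.mem_centralizer_singleton_iff.mpr (hcompD x.1 x.2).1
      · exact Subgroup.mem_centralizer_singleton_iff.mpr (hcompD x.1 x.2).2
    · -- ker chi membership
      show Matrix.GeneralLinearGroup.det (x.1 : GL22 F).val.1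
          * (Matrix.GeneralLinearGroup.det (x.1 : GL22 F).val.2)⁻¹ = 1
      rw [mul_inv_eq_one]
      exact (x.1).2
    · intro w
      apply Subtype.ext
      apply Subtype.ext
      rfl
    · intro x
      apply Subtype.ext
      apply Subtype.ext
      rfl
  -- card of the product group
  have hcardW : Nat.card ((Zc A).prod (Zc B)) = (q ^ 2 - 1) * (q ^ 2 - 1) := by
    rw [Nat.card_congr (Subgroup.prodEquiv (Zc A) (Zc B)).toEquiv, Nat.card_prod,
      card_Zc A hAirr, card_Zc B hBirr]
  have hcardW2 : Nat.card ((Zc A).prod (Zc B)) = (q - 1) * Nat.card (MonoidHom.ker (chi A B)) := by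
    rw [Subgroup.card_eq_card_quotient_mul_card_subgroup (MonoidHom.ker (chi A B))]
    rw [Nat.card_congr (QuotientGroup.quotientKerEquivOfSurjective _ hchisurj).toEquiv]
    rw [Nat.card_eq_fintype_card, Fintype.card_units (α := F)]
  -- arithmetic
  have hq2 : 2 ≤ q := Fintype.one_lt_card
  obtain ⟨m, hm⟩ : ∃ m, q = m + 2 := ⟨q - 2, by omega⟩
  have hq1 : q - 1 = m + 1 := by omega
  have hqsq : q ^ 2 - 1 = m ^ 2 + 4 * m + 3 := by
    have : q ^ 2 = m ^ 2 + 4 * m + 4 := by rw [hm]; ring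
    omega
  have hcardcentr : Nat.card (Subgroup.centralizer ({cls F p} : Set (SO4 F))) = (m + 3) ^ 2 := by
    have e1 : (m ^ 2 + 4 * m + 3) * (m ^ 2 + 4 * m + 3)
        = (m + 1) * Nat.card (MonoidHom.ker (chi A B)) := by
      rw [← hqsq, ← hq1, ← hcardW, hcardW2]
    rw [hkerchiD, hcardD, hq1] at e1
    have e2 : ((m+1) * (m+1)) * Nat.card (Subgroup.centralizer ({cls F p} : Set (SO4 F)))
        = ((m+1) * (m+1)) * ((m + 3) ^ 2) := by
      calc ((m+1) * (m+1)) * Nat.card (Subgroup.centralizer ({cls F p} : Set (SO4 F)))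
          = (m+1) * (Nat.card (Subgroup.centralizer ({cls F p} : Set (SO4 F))) * (m+1)) := by
            ring
        _ = (m ^ 2 + 4 * m + 3) * (m ^ 2 + 4 * m + 3) := e1.symm
        _ = ((m+1) * (m+1)) * ((m + 3) ^ 2) := by ring
    exact Nat.eq_of_mul_eq_mul_left (by positivity) e2
  constructor
  · rw [hcardcentr, hm]
  -- commutativity
  · intro a b ha hb
    obtain ⟨x, rfl⟩ := QuotientGroup.mk'_surjective (scalarHom F).range a
    obtain ⟨y, rfl⟩ := QuotientGroup.mk'_surjective (scalarHom F).range b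
    have hxD : x ∈ Dg := (memD_iff A B htr p hp x).mp ha
    have hyD : y ∈ Dg := (memD_iff A B htr p hp y).mp hb
    obtain ⟨hx1, hx2⟩ := hcompD x hxD
    obtain ⟨hy1, hy2⟩ := hcompD y hyD
    have hxy : x * y = y * x := by
      apply Subtype.ext
      apply Prod.ext
      · apply Units.ext
        simp only [Subgroup.coe_mul, Prod.fst_mul, Units.val_mul]
        refine commutant_comm (offdiag_ne hAirr) ?_ ?_
        · exact congrArg Units.val hx1
        · exact congrArg Units.val hy1
      · apply Units.ext
        simp only [Subgroup.coe_mul, Prod.snd_mul, Units.val_mul]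
        refine commutant_comm (offdiag_ne hBirr) ?_ ?_
        · exact congrArg Units.val hx2
        · exact congrArg Units.val hy2
    show QuotientGroup.mk x * QuotientGroup.mk y = QuotientGroup.mk y * QuotientGroup.mk x
    rw [← QuotientGroup.mk_mul, ← QuotientGroup.mk_mul, hxy]
end

section
/- Let x, y ∈ F^× with x ≠ y and x ≠ −y, and let B ∈ GL₂(F) with det B = xy and with characteristic polynomial irreducible over F. The centralizer in SO₄(F) of the element [(diag(x, y), B)] is a commutative group of cardinality q² − 1. -/
set_option linter.unusedSectionVars false
set_option maxHeartbeats 1000000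

open Matrix

variable (F : Type*) [Field F] [Fintype F] [DecidableEq F]

section Helpers

open Polynomial

variable {F}

lemma cp_fin_two (M : Matrix (Fin 2) (Fin 2) F) :
    M.charpoly = X^2 - C (M 0 0 + M 1 1) * X + C (M 0 0 * M 1 1 - M 0 1 * M 1 0) := by
  rw [Matrix.charpoly, Matrix.det_fin_two]
  simp [Matrix.charmatrix_apply_eq, Matrix.charmatrix_apply_ne, map_sub, _root_.map_mul, map_add]
  ring

lemma noRoot (M : Matrix (Fin 2) (Fin 2) F) (hirr : Irreducible M.charpoly) (t : F) :
    t^2 - (M 0 0 + M 1 1) * t + (M 0 0 * M 1 1 - M 0 1 * M 1 0) ≠ 0 := by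
  intro hroot
  have hfac : M.charpoly = (X - C t) * (X - C ((M 0 0 + M 1 1) - t)) := by
    rw [cp_fin_two]
    have h2 : M 0 0 * M 1 1 - M 0 1 * M 1 0 = t * ((M 0 0 + M 1 1) - t) := by
      linear_combination hroot
    rw [h2]
    simp only [_root_.map_mul, map_sub, map_add, map_pow]
    ring
  rcases hirr.isUnit_or_isUnit hfac with h | h
  · exact Polynomial.not_isUnit_X_sub_C _ h
  · exact Polynomial.not_isUnit_X_sub_C _ h

lemma entry01_ne (M : Matrix (Fin 2) (Fin 2) F) (hirr : Irreducible M.charpoly) :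
    M 0 1 ≠ 0 := by
  intro h
  exact noRoot M hirr (M 1 1) (by linear_combination (-(M 1 0)) * h)

lemma Hdet_ne (M : Matrix (Fin 2) (Fin 2) F) (hirr : Irreducible M.charpoly)
    (v : F × F) (hv : v ≠ 0) :
    (v.1 • (1 : Matrix (Fin 2) (Fin 2) F) + v.2 • M).det ≠ 0 := by
  intro h
  rw [Matrix.det_fin_two] at h
  simp only [Matrix.add_apply, Matrix.smul_apply, Matrix.one_apply, smul_eq_mul] at h
  norm_num at h
  rcases eq_or_ne v.2 0 with h2 | h2
  · have h1 : v.1 = 0 := by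
      rw [h2] at h
      simpa [mul_self_eq_zero] using h
    exact hv (Prod.ext h1 h2)
  · refine noRoot M hirr (-(v.1 / v.2)) ?_
    field_simp
    linear_combination h

lemma commutant_s15 (M h : Matrix (Fin 2) (Fin 2) F) (h01 : M 0 1 ≠ 0)
    (hc : h * M = M * h) :
    h = (h 0 0 - (h 0 1 / M 0 1) * M 0 0) • (1 : Matrix (Fin 2) (Fin 2) F)
        + (h 0 1 / M 0 1) • M := by
  have e00 : (h * M) 0 0 = (M * h) 0 0 := by rw [hc]
  have e01 : (h * M) 0 1 = (M * h) 0 1 := by rw [hc]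
  simp only [Matrix.mul_apply, Fin.sum_univ_two] at e00 e01
  ext i j
  fin_cases i <;> fin_cases j <;>
    simp only [Matrix.add_apply, Matrix.smul_apply, Matrix.one_apply, smul_eq_mul] <;>
    norm_num <;> field_simp
  · linear_combination -e00
  · linear_combination -e01

lemma indep (M : Matrix (Fin 2) (Fin 2) F) (h01 : M 0 1 ≠ 0) {a b c d : F}
    (h : a • (1 : Matrix (Fin 2) (Fin 2) F) + b • M = c • (1 : Matrix (Fin 2) (Fin 2) F) + d • M) :
    a = c ∧ b = d := by
  have e01 : (a • (1 : Matrix (Fin 2) (Fin 2) F) + b • M) 0 1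
      = (c • (1 : Matrix (Fin 2) (Fin 2) F) + d • M) 0 1 := by rw [h]
  have e00 : (a • (1 : Matrix (Fin 2) (Fin 2) F) + b • M) 0 0
      = (c • (1 : Matrix (Fin 2) (Fin 2) F) + d • M) 0 0 := by rw [h]
  simp only [Matrix.add_apply, Matrix.smul_apply, Matrix.one_apply, smul_eq_mul] at e01 e00
  norm_num at e01 e00
  have hbd : b = d := e01.resolve_right h01
  exact ⟨by linear_combination e00 - M 0 0 * hbd, hbd⟩

lemma comm_HH (M : Matrix (Fin 2) (Fin 2) F) (a b c d : F) :
    (a • (1 : Matrix (Fin 2) (Fin 2) F) + b • M) * (c • (1 : Matrix (Fin 2) (Fin 2) F) + d • M)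
      = (c • (1 : Matrix (Fin 2) (Fin 2) F) + d • M) * (a • (1 : Matrix (Fin 2) (Fin 2) F) + b • M) := by
  simp only [add_mul, mul_add, smul_mul_assoc, mul_smul_comm, one_mul, mul_one, smul_smul,
    smul_add]
  module

lemma comm_HB (M : Matrix (Fin 2) (Fin 2) F) (a b : F) :
    M * (a • (1 : Matrix (Fin 2) (Fin 2) F) + b • M)
      = (a • (1 : Matrix (Fin 2) (Fin 2) F) + b • M) * M := by
  simp [mul_add, add_mul, mul_smul_comm, smul_mul_assoc]

lemma diag_comm (f g : Fin 2 → F) :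
    Matrix.diagonal f * Matrix.diagonal g = Matrix.diagonal g * Matrix.diagonal f := by
  have h : (fun i => f i * g i) = fun i => g i * f i := funext fun i => mul_comm _ _
  rw [Matrix.diagonal_mul_diagonal, Matrix.diagonal_mul_diagonal, h]

end Helpers

/-- The matrix `v.1 • 1 + v.2 • B`. -/
noncomputable def Hmat (B : GL (Fin 2) F) (v : F × F) : Matrix (Fin 2) (Fin 2) F :=
  v.1 • (1 : Matrix (Fin 2) (Fin 2) F) + v.2 • (B : Matrix (Fin 2) (Fin 2) F)

/-- The element `(diag(1, det(Hmat v)), Hmat v)` of `GL22 F`. -/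
noncomputable def Qelt (B : GL (Fin 2) F)
    (hBirr : Irreducible (Matrix.charpoly (B : Matrix (Fin 2) (Fin 2) F)))
    (v : {v : F × F // v ≠ 0}) : GL22 F :=
  ⟨(Matrix.GeneralLinearGroup.mkOfDetNeZero
      (Matrix.diagonal ![1, (Hmat F B v.1).det])
      (by
        rw [Matrix.det_diagonal, Fin.prod_univ_two]
        simpa [Hmat] using Hdet_ne _ hBirr v.1 v.2),
    Matrix.GeneralLinearGroup.mkOfDetNeZero (Hmat F B v.1) (Hdet_ne _ hBirr v.1 v.2)),
   by
    show Matrix.GeneralLinearGroup.det _ = Matrix.GeneralLinearGroup.det _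
    apply Units.ext
    simp only [Matrix.GeneralLinearGroup.val_det_apply]
    show (Matrix.diagonal ![1, (Hmat F B v.1).det]).det = (Hmat F B v.1).det
    rw [Matrix.det_diagonal, Fin.prod_univ_two]
    simp⟩

lemma Qelt_fst (B : GL (Fin 2) F) (hBirr : Irreducible (Matrix.charpoly (B : Matrix (Fin 2) (Fin 2) F)))
    (v : {v : F × F // v ≠ 0}) :
    (((Qelt F B hBirr v).val.1 : GL (Fin 2) F) : Matrix (Fin 2) (Fin 2) F)
      = Matrix.diagonal ![1, (Hmat F B v.1).det] := rfl

lemma Qelt_snd (B : GL (Fin 2) F) (hBirr : Irreducible (Matrix.charpoly (B : Matrix (Fin 2) (Fin 2) F)))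
    (v : {v : F × F // v ≠ 0}) :
    (((Qelt F B hBirr v).val.2 : GL (Fin 2) F) : Matrix (Fin 2) (Fin 2) F) = Hmat F B v.1 := rfl

/-- For `x ≠ ±y` in `F^×` and `B` with `det B = xy` and irreducible characteristic polynomial,
the centralizer in `SO₄(F)` of `[(diag(x,y), B)]` is a commutative group of cardinality
`q² - 1`. -/
theorem centralizer_c3c4 (hq : Odd (Fintype.card F)) (x y : F)
    (hx : x ≠ 0) (hy : y ≠ 0) (hxy : x ≠ y) (hxy' : x ≠ -y)
    (B : GL (Fin 2) F)
    (hB : Matrix.det (B : Matrix (Fin 2) (Fin 2) F) = x * y)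
    (hBirr : Irreducible (Matrix.charpoly (B : Matrix (Fin 2) (Fin 2) F)))
    (p : GL22 F)
    (hp1 : (p.val.1 : Matrix (Fin 2) (Fin 2) F) = Matrix.diagonal ![x, y])
    (hp2 : p.val.2 = B) :
    Nat.card ↥(Subgroup.centralizer {cls F p}) = Fintype.card F ^ 2 - 1 ∧
    ∀ a b : SO4 F, a ∈ Subgroup.centralizer {cls F p} →
      b ∈ Subgroup.centralizer {cls F p} → a * b = b * a := by
  classical
  have hb01 : (B : Matrix (Fin 2) (Fin 2) F) 0 1 ≠ 0 := entry01_ne _ hBirr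
  -- p commutes with all Qelt's
  have hcommQ : ∀ v : {v : F × F // v ≠ 0}, p * Qelt F B hBirr v = Qelt F B hBirr v * p := by
    intro v
    apply Subtype.ext
    apply Prod.ext
    · apply Units.ext
      show (p.val.1 : Matrix (Fin 2) (Fin 2) F)
          * (((Qelt F B hBirr v).val.1 : GL (Fin 2) F) : Matrix (Fin 2) (Fin 2) F)
          = (((Qelt F B hBirr v).val.1 : GL (Fin 2) F) : Matrix (Fin 2) (Fin 2) F)
          * (p.val.1 : Matrix (Fin 2) (Fin 2) F)
      rw [Qelt_fst, hp1]
      exact diag_comm _ _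
    · apply Units.ext
      show (p.val.2 : Matrix (Fin 2) (Fin 2) F)
          * (((Qelt F B hBirr v).val.2 : GL (Fin 2) F) : Matrix (Fin 2) (Fin 2) F)
          = (((Qelt F B hBirr v).val.2 : GL (Fin 2) F) : Matrix (Fin 2) (Fin 2) F)
          * (p.val.2 : Matrix (Fin 2) (Fin 2) F)
      rw [Qelt_snd, hp2, Hmat]
      exact comm_HB _ _ _
  have hememb : ∀ v : {v : F × F // v ≠ 0},
      cls F (Qelt F B hBirr v) ∈ Subgroup.centralizer {cls F p} := by
    intro v
    rw [Subgroup.mem_centralizer_iff]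
    rintro g hg
    rw [Set.mem_singleton_iff] at hg
    subst hg
    show (QuotientGroup.mk p : SO4 F) * QuotientGroup.mk (Qelt F B hBirr v)
        = QuotientGroup.mk (Qelt F B hBirr v) * QuotientGroup.mk p
    rw [← QuotientGroup.mk_mul, ← QuotientGroup.mk_mul, hcommQ]
  let e : {v : F × F // v ≠ 0} → ↥(Subgroup.centralizer {cls F p}) :=
    fun v => ⟨cls F (Qelt F B hBirr v), hememb v⟩
  have hinj : Function.Injective e := by
    intro v w hvw
    have h0 : cls F (Qelt F B hBirr v) = cls F (Qelt F B hBirr w) :=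
      congrArg Subtype.val hvw
    have h1 : (Qelt F B hBirr v)⁻¹ * Qelt F B hBirr w ∈ (scalarHom F).range :=
      QuotientGroup.eq.mp h0
    obtain ⟨c, hc⟩ := h1
    have hqw : Qelt F B hBirr w = Qelt F B hBirr v * scalarHom F c := by
      rw [hc]
      group
    have hfst : (Matrix.diagonal ![1, (Hmat F B w.1).det] : Matrix (Fin 2) (Fin 2) F)
        = Matrix.diagonal ![1, (Hmat F B v.1).det] * Matrix.scalar (Fin 2) (c : F) := by
      have h2 := congrArg
        (fun z : GL22 F => ((z.val.1 : GL (Fin 2) F) : Matrix (Fin 2) (Fin 2) F)) hqw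
      simpa [Qelt_fst, scalarHom, sc] using h2
    have hc1 : (c : F) = 1 := by
      have h3 := congrFun (congrFun hfst 0) 0
      simpa [Matrix.scalar_apply, Matrix.diagonal_mul_diagonal, Matrix.diagonal_apply_eq]
        using h3.symm
    have hcu : c = 1 := Units.ext hc1
    rw [hcu, _root_.map_one, mul_one] at hqw
    have hsnd : Hmat F B w.1 = Hmat F B v.1 := by
      have h2 := congrArg
        (fun z : GL22 F => ((z.val.2 : GL (Fin 2) F) : Matrix (Fin 2) (Fin 2) F)) hqw
      simpa [Qelt_snd] using h2
    rw [Hmat, Hmat] at hsnd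
    obtain ⟨ha, hb⟩ := indep _ hb01 hsnd
    apply Subtype.ext
    exact (Prod.ext ha hb).symm
  have hsurj : Function.Surjective e := by
    rintro ⟨z, hz⟩
    obtain ⟨q, rfl⟩ := QuotientGroup.mk_surjective z
    have hcm : cls F p * QuotientGroup.mk q = QuotientGroup.mk q * cls F p :=
      Subgroup.mem_centralizer_iff.mp hz _ (Set.mem_singleton _)
    have hmem : (p * q)⁻¹ * (q * p) ∈ (scalarHom F).range := by
      apply QuotientGroup.eq.mp
      rw [QuotientGroup.mk_mul, QuotientGroup.mk_mul]
      exact hcm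
    obtain ⟨c, hc⟩ := hmem
    have hqp : q * p = (p * q) * scalarHom F c := by
      rw [hc]
      group
    have E1 : (q.val.1 : Matrix (Fin 2) (Fin 2) F) * Matrix.diagonal ![x, y]
        = Matrix.diagonal ![x, y] * (q.val.1 : Matrix (Fin 2) (Fin 2) F)
          * Matrix.scalar (Fin 2) (c : F) := by
      have h2 := congrArg
        (fun z : GL22 F => ((z.val.1 : GL (Fin 2) F) : Matrix (Fin 2) (Fin 2) F)) hqp
      simpa [hp1, scalarHom, sc, mul_assoc] using h2
    have Ee : ∀ i j, (q.val.1 : Matrix (Fin 2) (Fin 2) F) i j * (![x, y] j)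
        = (![x, y] i) * (q.val.1 : Matrix (Fin 2) (Fin 2) F) i j * (c : F) := by
      intro i j
      have h3 := congrFun (congrFun E1 i) j
      simpa [Matrix.mul_diagonal, Matrix.diagonal_mul, Matrix.scalar_apply, mul_assoc]
        using h3
    have hdetg : ((q.val.1 : GL (Fin 2) F) : Matrix (Fin 2) (Fin 2) F).det ≠ 0 :=
      (Matrix.isUnits_det_units (q.val.1 : GL (Fin 2) F)).ne_zero
    have hdeth : ((q.val.2 : GL (Fin 2) F) : Matrix (Fin 2) (Fin 2) F).det ≠ 0 :=
      (Matrix.isUnits_det_units (q.val.2 : GL (Fin 2) F)).ne_zero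
    have hdetgh : ((q.val.1 : GL (Fin 2) F) : Matrix (Fin 2) (Fin 2) F).det
        = ((q.val.2 : GL (Fin 2) F) : Matrix (Fin 2) (Fin 2) F).det := by
      have h4 := q.2
      have h5 : Matrix.GeneralLinearGroup.det q.val.1 = Matrix.GeneralLinearGroup.det q.val.2 := h4
      have h6 := congrArg Units.val h5
      simpa [Matrix.GeneralLinearGroup.val_det_apply] using h6
    have hc1 : (c : F) = 1 := by
      by_contra hc1
      have hcne : (1 : F) - (c : F) ≠ 0 := sub_ne_zero.mpr (Ne.symm hc1)
      have hg00 : (q.val.1 : Matrix (Fin 2) (Fin 2) F) 0 0 = 0 := by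
        have h7 := Ee 0 0
        simp (config := { failIfUnchanged := false }) only [Matrix.cons_val_zero] at h7
        have h8 : (q.val.1 : Matrix (Fin 2) (Fin 2) F) 0 0 * (x * ((1 : F) - (c : F))) = 0 := by
          linear_combination h7
        rcases mul_eq_zero.mp h8 with h9 | h9
        · exact h9
        · exact absurd h9 (mul_ne_zero hx hcne)
      have hg11 : (q.val.1 : Matrix (Fin 2) (Fin 2) F) 1 1 = 0 := by
        have h7 := Ee 1 1
        simp (config := { failIfUnchanged := false }) only [Matrix.cons_val_one,
          Matrix.head_cons, Matrix.cons_val_zero] at h7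
        have h8 : (q.val.1 : Matrix (Fin 2) (Fin 2) F) 1 1 * (y * ((1 : F) - (c : F))) = 0 := by
          linear_combination h7
        rcases mul_eq_zero.mp h8 with h9 | h9
        · exact h9
        · exact absurd h9 (mul_ne_zero hy hcne)
      rw [Matrix.det_fin_two, hg00, hg11] at hdetg
      have hg01 : (q.val.1 : Matrix (Fin 2) (Fin 2) F) 0 1 ≠ 0 := by
        intro h10
        rw [h10] at hdetg
        simp at hdetg
      have hg10 : (q.val.1 : Matrix (Fin 2) (Fin 2) F) 1 0 ≠ 0 := by
        intro h10
        rw [h10] at hdetg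
        simp at hdetg
      have h11 : y = x * (c : F) := by
        have h7 := Ee 0 1
        simp (config := { failIfUnchanged := false }) only [Matrix.cons_val_zero,
          Matrix.cons_val_one, Matrix.head_cons] at h7
        apply mul_left_cancel₀ hg01
        linear_combination h7
      have h12 : x = y * (c : F) := by
        have h7 := Ee 1 0
        simp (config := { failIfUnchanged := false }) only [Matrix.cons_val_zero,
          Matrix.cons_val_one, Matrix.head_cons] at h7
        apply mul_left_cancel₀ hg10
        linear_combination h7
      have h13 : x * ((c : F) - 1) * ((c : F) + 1) = 0 := by
        linear_combination -(c : F) * h11 - h12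
      rcases mul_eq_zero.mp h13 with h14 | h14
      · rcases mul_eq_zero.mp h14 with h15 | h15
        · exact hx h15
        · exact hc1 (by linear_combination h15)
      · have h15 : (c : F) = -1 := by linear_combination h14
        apply hxy'
        rw [h11, h15]
        ring
    have hcu : c = 1 := Units.ext hc1
    rw [hcu, _root_.map_one, mul_one] at hqp
    -- now q commutes with p
    have E1' : (q.val.1 : Matrix (Fin 2) (Fin 2) F) * Matrix.diagonal ![x, y]
        = Matrix.diagonal ![x, y] * (q.val.1 : Matrix (Fin 2) (Fin 2) F) := by
      have h2 := congrArg
        (fun z : GL22 F => ((z.val.1 : GL (Fin 2) F) : Matrix (Fin 2) (Fin 2) F)) hqp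
      simpa [hp1] using h2
    have E2' : (q.val.2 : Matrix (Fin 2) (Fin 2) F) * (B : Matrix (Fin 2) (Fin 2) F)
        = (B : Matrix (Fin 2) (Fin 2) F) * (q.val.2 : Matrix (Fin 2) (Fin 2) F) := by
      have h2 := congrArg
        (fun z : GL22 F => ((z.val.2 : GL (Fin 2) F) : Matrix (Fin 2) (Fin 2) F)) hqp
      simpa [hp2] using h2
    have hg01 : (q.val.1 : Matrix (Fin 2) (Fin 2) F) 0 1 = 0 := by
      have h3 := congrFun (congrFun E1' 0) 1
      simp only [Matrix.mul_diagonal, Matrix.diagonal_mul, Matrix.cons_val_zero,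
        Matrix.cons_val_one, Matrix.head_cons] at h3
      have h4 : (q.val.1 : Matrix (Fin 2) (Fin 2) F) 0 1 * (y - x) = 0 := by
        linear_combination h3
      rcases mul_eq_zero.mp h4 with h5 | h5
      · exact h5
      · exact absurd (by linear_combination h5) hxy.symm
    have hg10 : (q.val.1 : Matrix (Fin 2) (Fin 2) F) 1 0 = 0 := by
      have h3 := congrFun (congrFun E1' 1) 0
      simp only [Matrix.mul_diagonal, Matrix.diagonal_mul, Matrix.cons_val_zero,
        Matrix.cons_val_one, Matrix.head_cons] at h3
      have h4 : (q.val.1 : Matrix (Fin 2) (Fin 2) F) 1 0 * (x - y) = 0 := by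
        linear_combination h3
      rcases mul_eq_zero.mp h4 with h5 | h5
      · exact h5
      · exact absurd (by linear_combination h5) hxy
    have hdetg2 : ((q.val.1 : GL (Fin 2) F) : Matrix (Fin 2) (Fin 2) F).det
        = (q.val.1 : Matrix (Fin 2) (Fin 2) F) 0 0
          * (q.val.1 : Matrix (Fin 2) (Fin 2) F) 1 1 := by
      rw [Matrix.det_fin_two, hg01]
      ring
    have ha : (q.val.1 : Matrix (Fin 2) (Fin 2) F) 0 0 ≠ 0 := by
      intro h5
      rw [hdetg2, h5] at hdetg
      simp at hdetg
    have hg11ne : (q.val.1 : Matrix (Fin 2) (Fin 2) F) 1 1 ≠ 0 := by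
      intro h5
      rw [hdetg2, h5] at hdetg
      simp at hdetg
    set a := (q.val.1 : Matrix (Fin 2) (Fin 2) F) 0 0 with hadef
    set g11 := (q.val.1 : Matrix (Fin 2) (Fin 2) F) 1 1 with hg11def
    have hhdec := commutant_s15 (B : Matrix (Fin 2) (Fin 2) F)
      ((q.val.2 : GL (Fin 2) F) : Matrix (Fin 2) (Fin 2) F) hb01 E2'
    set β := ((q.val.2 : GL (Fin 2) F) : Matrix (Fin 2) (Fin 2) F) 0 1
      / (B : Matrix (Fin 2) (Fin 2) F) 0 1 with hβdef
    set α := ((q.val.2 : GL (Fin 2) F) : Matrix (Fin 2) (Fin 2) F) 0 0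
      - β * (B : Matrix (Fin 2) (Fin 2) F) 0 0 with hαdef
    have hhdec' : ((q.val.2 : GL (Fin 2) F) : Matrix (Fin 2) (Fin 2) F)
        = α • (1 : Matrix (Fin 2) (Fin 2) F) + β • (B : Matrix (Fin 2) (Fin 2) F) := hhdec
    have hv : ((α / a, β / a) : F × F) ≠ 0 := by
      intro h5
      have h6 : α / a = 0 := congrArg Prod.fst h5
      have h7 : β / a = 0 := congrArg Prod.snd h5
      have h8 : α = 0 := by
        rcases div_eq_zero_iff.mp h6 with h | h
        · exact h
        · exact absurd h ha
      have h9 : β = 0 := by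
        rcases div_eq_zero_iff.mp h7 with h | h
        · exact h
        · exact absurd h ha
      rw [h8, h9] at hhdec'
      simp only [zero_smul, add_zero] at hhdec'
      rw [hhdec'] at hdeth
      simp [Matrix.det_fin_two] at hdeth
    have hHv : Hmat F B (α / a, β / a)
        = a⁻¹ • ((q.val.2 : GL (Fin 2) F) : Matrix (Fin 2) (Fin 2) F) := by
      rw [Hmat, hhdec', smul_add, smul_smul, smul_smul]
      congr 1 <;> congr 1 <;> field_simp
    have hdetHv : (Hmat F B (α / a, β / a)).det * a = g11 := by
      rw [hHv, Matrix.det_smul, hdetgh.symm, hdetg2]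
      simp only [Fintype.card_fin]
      field_simp
    refine ⟨⟨(α / a, β / a), hv⟩, ?_⟩
    apply Subtype.ext
    show cls F (Qelt F B hBirr ⟨(α / a, β / a), hv⟩) = QuotientGroup.mk q
    have hqeq : q = Qelt F B hBirr ⟨(α / a, β / a), hv⟩ * scalarHom F (Units.mk0 a ha) := by
      apply Subtype.ext
      apply Prod.ext
      · apply Units.ext
        show (q.val.1 : Matrix (Fin 2) (Fin 2) F)
            = Matrix.diagonal ![1, (Hmat F B (α / a, β / a)).det] * Matrix.scalar (Fin 2) a
        rw [Matrix.scalar_apply, Matrix.diagonal_mul_diagonal]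
        ext i j
        fin_cases i <;> fin_cases j <;>
          simp [Matrix.diagonal_apply, hg01, hg10, hdetHv] <;>
          first
            | rfl
            | (rw [show ((Hmat F B (α / a, β / a)).det * a : F) = g11 from hdetHv]; rfl)
      · apply Units.ext
        show (q.val.2 : Matrix (Fin 2) (Fin 2) F)
            = Hmat F B (α / a, β / a) * Matrix.scalar (Fin 2) a
        have hsc : Hmat F B (α / a, β / a) * Matrix.scalar (Fin 2) a
            = a • Hmat F B (α / a, β / a) := by
          rw [Matrix.scalar_apply]
          ext i j
          simp [Matrix.mul_diagonal, mul_comm]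
        rw [hsc, hHv, smul_smul, mul_inv_cancel₀ ha, one_smul]
    rw [hqeq]
    show (QuotientGroup.mk (Qelt F B hBirr ⟨(α / a, β / a), hv⟩) : SO4 F)
        = QuotientGroup.mk (Qelt F B hBirr ⟨(α / a, β / a), hv⟩ * scalarHom F (Units.mk0 a ha))
    rw [QuotientGroup.eq, inv_mul_cancel_left]
    exact ⟨Units.mk0 a ha, rfl⟩
  constructor
  · rw [← Nat.card_eq_of_bijective e ⟨hinj, hsurj⟩, Nat.card_eq_fintype_card]
    have h1 : Fintype.card {v : F × F // v ≠ 0} = Fintype.card (F × F) - 1 := by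
      have h2 := Fintype.card_subtype_compl (fun v : F × F => v = 0)
      rw [Fintype.card_subtype_eq] at h2
      exact h2
    rw [h1, Fintype.card_prod, sq]
  · intro A C hA hC
    obtain ⟨v, hv⟩ := hsurj ⟨A, hA⟩
    obtain ⟨w, hw⟩ := hsurj ⟨C, hC⟩
    have hAv : A = cls F (Qelt F B hBirr v) := (congrArg Subtype.val hv).symm
    have hCw : C = cls F (Qelt F B hBirr w) := (congrArg Subtype.val hw).symm
    rw [hAv, hCw]
    show QuotientGroup.mk _ * QuotientGroup.mk _ = QuotientGroup.mk _ * QuotientGroup.mk _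
    rw [← QuotientGroup.mk_mul, ← QuotientGroup.mk_mul]
    congr 1
    apply Subtype.ext
    apply Prod.ext
    · apply Units.ext
      show (((Qelt F B hBirr v).val.1 : GL (Fin 2) F) : Matrix (Fin 2) (Fin 2) F)
          * (((Qelt F B hBirr w).val.1 : GL (Fin 2) F) : Matrix (Fin 2) (Fin 2) F)
          = (((Qelt F B hBirr w).val.1 : GL (Fin 2) F) : Matrix (Fin 2) (Fin 2) F)
          * (((Qelt F B hBirr v).val.1 : GL (Fin 2) F) : Matrix (Fin 2) (Fin 2) F)
      rw [Qelt_fst, Qelt_fst]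
      exact diag_comm _ _
    · apply Units.ext
      show (((Qelt F B hBirr v).val.2 : GL (Fin 2) F) : Matrix (Fin 2) (Fin 2) F)
          * (((Qelt F B hBirr w).val.2 : GL (Fin 2) F) : Matrix (Fin 2) (Fin 2) F)
          = (((Qelt F B hBirr w).val.2 : GL (Fin 2) F) : Matrix (Fin 2) (Fin 2) F)
          * (((Qelt F B hBirr v).val.2 : GL (Fin 2) F) : Matrix (Fin 2) (Fin 2) F)
      rw [Qelt_snd, Qelt_snd, Hmat, Hmat]
      exact comm_HH _ _ _ _ _
end

section
/- There is exactly one group homomorphism χ : SO₄(F) → ℂ^× of order exactly 2, and it is given by χ([(g,h)]) = 1 if det g is a square in F^× and χ([(g,h)]) = −1 otherwise. -/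
set_option linter.unusedSectionVars false

open Matrix

variable (F : Type*) [Field F] [Fintype F] [DecidableEq F]

namespace SO4Proof

/-! ### Auxiliary constructions -/

lemma ringChar_ne_two (hq : Odd (Fintype.card F)) : ringChar F ≠ 2 := by
  intro h
  have := FiniteField.even_card_of_char_two (F := F) h
  rw [Nat.odd_iff] at hq
  omega

lemma memL {g : GL (Fin 2) F} (h : Matrix.GeneralLinearGroup.det g = 1) :
    ((g, 1) : GL (Fin 2) F × GL (Fin 2) F) ∈ GL22 F := by
  show Matrix.GeneralLinearGroup.det g = Matrix.GeneralLinearGroup.det (1 : GL (Fin 2) F)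
  rw [h, _root_.map_one]

lemma memR {g : GL (Fin 2) F} (h : Matrix.GeneralLinearGroup.det g = 1) :
    ((1, g) : GL (Fin 2) F × GL (Fin 2) F) ∈ GL22 F := by
  show Matrix.GeneralLinearGroup.det (1 : GL (Fin 2) F) = Matrix.GeneralLinearGroup.det g
  rw [h, _root_.map_one]

/-- The pair `(g, 1)` as an element of `GL22 F`. -/
def pL (g : GL (Fin 2) F) (h : Matrix.GeneralLinearGroup.det g = 1) : GL22 F :=
  ⟨(g, 1), memL F h⟩

/-- The pair `(1, g)` as an element of `GL22 F`. -/
def pR (g : GL (Fin 2) F) (h : Matrix.GeneralLinearGroup.det g = 1) : GL22 F :=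
  ⟨(1, g), memR F h⟩

lemma pL_mul (g g' : GL (Fin 2) F) (h : Matrix.GeneralLinearGroup.det g = 1)
    (h' : Matrix.GeneralLinearGroup.det g' = 1) :
    pL F (g * g') (by rw [_root_.map_mul, h, h', one_mul]) = pL F g h * pL F g' h' := by
  apply Subtype.ext
  apply Prod.ext
  · rfl
  · exact (one_mul 1).symm

/-- The swap automorphism of `GL22 F`. -/
def swapHom : GL22 F →* GL22 F :=
  MonoidHom.mk' (fun p => ⟨(p.val.2, p.val.1), p.prop.symm⟩) (fun a b => Subtype.ext rfl)

/-- The diagonal matrix `diag(a, 1)` in `GL₂(F)`. -/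
def dmat (a : Fˣ) : GL (Fin 2) F :=
  Matrix.GeneralLinearGroup.mkOfDetNeZero !![(a : F), 0; 0, 1]
    (by simpa [Matrix.det_fin_two_of] using a.ne_zero)

lemma dmat_val (a : Fˣ) : (dmat F a).val = !![(a : F), 0; 0, 1] := rfl

lemma det_dmat (a : Fˣ) : Matrix.GeneralLinearGroup.det (dmat F a) = a := by
  apply Units.ext
  show (dmat F a).val.det = (a : F)
  simp [dmat_val, Matrix.det_fin_two_of]

lemma memD (a : Fˣ) : ((dmat F a, dmat F a) : GL (Fin 2) F × GL (Fin 2) F) ∈ GL22 F := rfl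

/-- The homomorphism `a ↦ (diag(a,1), diag(a,1))` into `GL22 F`. -/
def pairD : Fˣ →* GL22 F :=
  MonoidHom.mk' (fun a => ⟨(dmat F a, dmat F a), memD F a⟩) (by
    intro a b
    apply Subtype.ext
    apply Prod.ext <;>
    · apply Units.ext
      show (!![((a * b : Fˣ) : F), 0; 0, 1] : Matrix (Fin 2) (Fin 2) F) =
        !![(a : F), 0; 0, 1] * !![(b : F), 0; 0, 1]
      rw [Matrix.mul_fin_two]
      norm_num)

/-- Determinant of the first component, as a homomorphism `GL22 F →* Fˣ`. -/
def detFst : GL22 F →* Fˣ :=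
  (Matrix.GeneralLinearGroup.det).comp ((MonoidHom.fst _ _).comp (GL22 F).subtype)

lemma detFst_apply (p : GL22 F) : detFst F p = Matrix.GeneralLinearGroup.det p.val.1 := rfl

/-- The upper unipotent matrix as an element of `GL₂(F)`. -/
def eU (t : F) : GL (Fin 2) F :=
  Matrix.GeneralLinearGroup.mkOfDetNeZero !![1, t; 0, 1] (by simp [Matrix.det_fin_two_of])

/-- The lower unipotent matrix as an element of `GL₂(F)`. -/
def eL (t : F) : GL (Fin 2) F :=
  Matrix.GeneralLinearGroup.mkOfDetNeZero !![1, 0; t, 1] (by simp [Matrix.det_fin_two_of])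

lemma det_eU (t : F) : Matrix.GeneralLinearGroup.det (eU F t) = 1 := by
  apply Units.ext
  show (!![1, t; 0, 1] : Matrix (Fin 2) (Fin 2) F).det = 1
  simp [Matrix.det_fin_two_of]

lemma det_eL (t : F) : Matrix.GeneralLinearGroup.det (eL F t) = 1 := by
  apply Units.ext
  show (!![1, 0; t, 1] : Matrix (Fin 2) (Fin 2) F).det = 1
  simp [Matrix.det_fin_two_of]

/-- Upper unipotents (in the left factor) as a homomorphism from `Multiplicative F`. -/
def eUL : Multiplicative F →* GL22 F :=
  MonoidHom.mk' (fun t => pL F (eU F t.toAdd) (det_eU F _)) (by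
    intro a b
    apply Subtype.ext
    apply Prod.ext
    · apply Units.ext
      show (!![1, (a * b).toAdd; 0, 1] : Matrix (Fin 2) (Fin 2) F) =
        !![1, a.toAdd; 0, 1] * !![1, b.toAdd; 0, 1]
      rw [Matrix.mul_fin_two]
      norm_num [toAdd_mul, add_comm]
    · exact (one_mul 1).symm)

/-- Lower unipotents (in the left factor) as a homomorphism from `Multiplicative F`. -/
def eLL : Multiplicative F →* GL22 F :=
  MonoidHom.mk' (fun t => pL F (eL F t.toAdd) (det_eL F _)) (by
    intro a b
    apply Subtype.ext
    apply Prod.ext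
    · apply Units.ext
      show (!![1, 0; (a * b).toAdd, 1] : Matrix (Fin 2) (Fin 2) F) =
        !![1, 0; a.toAdd, 1] * !![1, 0; b.toAdd, 1]
      rw [Matrix.mul_fin_two]
      norm_num [toAdd_mul, add_comm]
    · exact (one_mul 1).symm)

lemma eq_one_of_sq_of_odd {x : ℂˣ} (hsq : x * x = 1) {n : ℕ} (hn : Odd n)
    (hx : x ^ n = 1) : x = 1 := by
  obtain ⟨k, rfl⟩ := hn
  have h2 : x ^ 2 = 1 := by rw [sq]; exact hsq
  rwa [pow_add, pow_mul, h2, one_pow, one_mul, pow_one] at hx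

lemma kill_additive (hq : Odd (Fintype.card F)) (χ' : GL22 F →* ℂˣ)
    (hsq : ∀ x, χ' x * χ' x = 1) (e : Multiplicative F →* GL22 F) (m : Multiplicative F) :
    χ' (e m) = 1 := by
  apply eq_one_of_sq_of_odd (hsq _) hq
  have hm : m ^ (Fintype.card F) = 1 := by
    rw [← ofAdd_toAdd m, ← ofAdd_nsmul]
    have : (Fintype.card F) • m.toAdd = 0 := by
      rw [nsmul_eq_mul, Nat.cast_card_eq_zero, zero_mul]
    rw [this]
    rfl
  rw [← _root_.map_pow, ← _root_.map_pow, hm, _root_.map_one, _root_.map_one]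

lemma chi_eUL (hq : Odd (Fintype.card F)) (χ' : GL22 F →* ℂˣ)
    (hsq : ∀ x, χ' x * χ' x = 1) (t : F) : χ' (pL F (eU F t) (det_eU F t)) = 1 :=
  kill_additive F hq χ' hsq (eUL F) (Multiplicative.ofAdd t)

lemma chi_eLL (hq : Odd (Fintype.card F)) (χ' : GL22 F →* ℂˣ)
    (hsq : ∀ x, χ' x * χ' x = 1) (t : F) : χ' (pL F (eL F t) (det_eL F t)) = 1 :=
  kill_additive F hq χ' hsq (eLL F) (Multiplicative.ofAdd t)

lemma chi_pL (hq : Odd (Fintype.card F)) (χ' : GL22 F →* ℂˣ)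
    (hsq : ∀ x, χ' x * χ' x = 1) :
    ∀ (g : GL (Fin 2) F) (hg : Matrix.GeneralLinearGroup.det g = 1), χ' (pL F g hg) = 1 := by
  have main : ∀ (g : GL (Fin 2) F) (hg : Matrix.GeneralLinearGroup.det g = 1),
      g.val 1 0 ≠ 0 → χ' (pL F g hg) = 1 := by
    intro g hg hc
    have hdet : g.val 0 0 * g.val 1 1 - g.val 0 1 * g.val 1 0 = 1 := by
      have := congrArg Units.val hg
      rw [Matrix.GeneralLinearGroup.val_det_apply, Units.val_one] at this
      rwa [Matrix.det_fin_two] at this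
    set a := g.val 0 0 with ha
    set b := g.val 0 1 with hb
    set c := g.val 1 0 with hc'
    set d := g.val 1 1 with hd
    have key : g = eU F ((a - 1) / c) * (eL F c * eU F ((d - 1) / c)) := by
      apply Units.ext
      show g.val = !![1, (a-1)/c; 0, 1] * (!![1, 0; c, 1] * !![1, (d-1)/c; 0, 1])
      rw [Matrix.eta_fin_two g.val, ← ha, ← hb, ← hc', ← hd, Matrix.mul_fin_two,
        Matrix.mul_fin_two]
      ext i j
      fin_cases i <;> fin_cases j <;> simp only [Fin.zero_eta, Fin.mk_one, Matrix.of_apply,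
        Matrix.cons_val', Matrix.cons_val_zero, Matrix.cons_val_one, Matrix.empty_val',
        Matrix.cons_val_fin_one, Matrix.head_cons] <;> field_simp <;> ring_nf <;>
        first
        | linear_combination hdet
        | linear_combination -hdet
        | linear_combination -2*hdet
        | skip
    have hdets2 : Matrix.GeneralLinearGroup.det (eL F c) *
        Matrix.GeneralLinearGroup.det (eU F ((d - 1) / c)) = 1 := by
      rw [det_eL, det_eU, one_mul]
    have hkey2 : pL F g hg = pL F (eU F ((a - 1) / c)) (det_eU F _) *
        (pL F (eL F c) (det_eL F _) * pL F (eU F ((d - 1) / c)) (det_eU F _)) := by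
      apply Subtype.ext
      apply Prod.ext
      · exact key
      · show (1 : GL (Fin 2) F) = 1 * (1 * 1)
        rw [one_mul, one_mul]
    rw [hkey2, _root_.map_mul, _root_.map_mul, chi_eUL F hq χ' hsq, chi_eLL F hq χ' hsq,
      chi_eUL F hq χ' hsq, one_mul, one_mul]
  intro g hg
  by_cases hc : g.val 1 0 ≠ 0
  · exact main g hg hc
  · push_neg at hc
    have hdet : g.val 0 0 * g.val 1 1 - g.val 0 1 * g.val 1 0 = 1 := by
      have := congrArg Units.val hg
      rw [Matrix.GeneralLinearGroup.val_det_apply, Units.val_one] at this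
      rwa [Matrix.det_fin_two] at this
    have ha : g.val 0 0 ≠ 0 := by
      intro h0
      rw [h0, hc] at hdet
      simp at hdet
    have hg' : Matrix.GeneralLinearGroup.det (eL F 1 * g) = 1 := by
      rw [_root_.map_mul, det_eL, one_mul, hg]
    have hcc : (eL F 1 * g).val 1 0 ≠ 0 := by
      show ((!![1, 0; 1, 1] : Matrix (Fin 2) (Fin 2) F) * g.val) 1 0 ≠ 0
      rw [Matrix.mul_apply, Fin.sum_univ_two]
      simpa [hc] using ha
    have h1 := main (eL F 1 * g) hg' hcc
    rw [pL_mul F _ _ (det_eL F 1) hg, _root_.map_mul, chi_eLL F hq χ' hsq, one_mul] at h1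
    exact h1

lemma chi_pR (hq : Odd (Fintype.card F)) (χ' : GL22 F →* ℂˣ)
    (hsq : ∀ x, χ' x * χ' x = 1)
    (g : GL (Fin 2) F) (hg : Matrix.GeneralLinearGroup.det g = 1) : χ' (pR F g hg) = 1 := by
  have := chi_pL F hq (χ'.comp (swapHom F)) (fun x => hsq _) g hg
  have heq : (swapHom F) (pL F g hg) = pR F g hg := Subtype.ext rfl
  rwa [MonoidHom.comp_apply, heq] at this

/-- Any square-one character of `GL22 F` factors through the determinant of the
first component, evaluated on `diag(a,1)` pairs. -/
lemma chi_factor (hq : Odd (Fintype.card F)) (χ' : GL22 F →* ℂˣ)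
    (hsq : ∀ x, χ' x * χ' x = 1) (p : GL22 F) :
    χ' p = χ' (pairD F (detFst F p)) := by
  obtain ⟨⟨g, h⟩, hp⟩ := p
  have hp' : Matrix.GeneralLinearGroup.det g = Matrix.GeneralLinearGroup.det h := hp
  set a := Matrix.GeneralLinearGroup.det g with hadef
  have hg1 : Matrix.GeneralLinearGroup.det ((dmat F a)⁻¹ * g) = 1 := by
    rw [_root_.map_mul, _root_.map_inv, det_dmat, ← hadef, inv_mul_cancel]
  have hh1 : Matrix.GeneralLinearGroup.det ((dmat F a)⁻¹ * h) = 1 := by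
    rw [_root_.map_mul, _root_.map_inv, det_dmat, ← hp', inv_mul_cancel]
  have hdec : (⟨(g, h), hp⟩ : GL22 F) =
      pairD F a * (pL F ((dmat F a)⁻¹ * g) hg1 * pR F ((dmat F a)⁻¹ * h) hh1) := by
    apply Subtype.ext
    apply Prod.ext
    · show g = dmat F a * (((dmat F a)⁻¹ * g) * 1)
      rw [mul_one, ← mul_assoc, mul_inv_cancel, one_mul]
    · show h = dmat F a * (1 * ((dmat F a)⁻¹ * h))
      rw [one_mul, ← mul_assoc, mul_inv_cancel, one_mul]
  have hdfst : detFst F (⟨(g, h), hp⟩ : GL22 F) = a := rfl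
  rw [hdfst, hdec, _root_.map_mul, _root_.map_mul, chi_pL F hq χ' hsq, chi_pR F hq χ' hsq,
    mul_one, mul_one]

/-! ### The quadratic character -/

/-- The quadratic character of `Fˣ`, valued in `ℂˣ`. -/
noncomputable def tau : Fˣ →* ℂˣ :=
  (Units.map (Int.castRingHom ℂ).toMonoidHom).comp
    (MulChar.equivToUnitHom (quadraticChar F))

lemma tau_sq (a : Fˣ) : tau F a * tau F a = 1 := by
  have h : tau F a = (Units.map (Int.castRingHom ℂ).toMonoidHom)
      ((MulChar.equivToUnitHom (quadraticChar F)) a) := rfl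
  rw [h, ← _root_.map_mul, Int.units_mul_self, _root_.map_one]

lemma tau_of_isSquare {a : Fˣ} (h : IsSquare a) : tau F a = 1 := by
  obtain ⟨b, rfl⟩ := h
  rw [_root_.map_mul]
  exact tau_sq F b

lemma tau_of_not_isSquare (hq : Odd (Fintype.card F)) {a : Fˣ} (h : ¬IsSquare a) :
    tau F a = -1 := by
  have hF : ¬IsSquare (a : F) := by
    intro hs
    apply h
    rw [FiniteField.unit_isSquare_iff (ringChar_ne_two F hq)]
    rw [FiniteField.isSquare_iff (ringChar_ne_two F hq) a.ne_zero] at hs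
    exact Units.ext (by rw [Units.val_pow_eq_pow_val]; simpa using hs)
  have hqc : quadraticChar F (a : F) = -1 := quadraticChar_neg_one_iff_not_isSquare.mpr hF
  apply Units.ext
  show ((((MulChar.equivToUnitHom (quadraticChar F)) a : ℤ)) : ℂ) = -1
  rw [MulChar.coe_equivToUnitHom, hqc]
  norm_num

lemma mul_of_not_isSquare (hq : Odd (Fintype.card F)) {a b : Fˣ}
    (ha : ¬IsSquare a) (hb : ¬IsSquare b) : IsSquare (a * b) := by
  have h2 := ringChar_ne_two F hq
  have key : ∀ u : Fˣ, ¬IsSquare u → u ^ (Fintype.card F / 2) = -1 := by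
    intro u hu
    rcases FiniteField.pow_dichotomy h2 u.ne_zero with h | h
    · exfalso
      apply hu
      rw [FiniteField.unit_isSquare_iff h2]
      apply Units.ext
      rw [Units.val_pow_eq_pow_val]
      exact h
    · apply Units.ext
      rw [Units.val_pow_eq_pow_val]
      simpa using h
  rw [FiniteField.unit_isSquare_iff h2, mul_pow, key a ha, key b hb]
  simp

/-! ### The canonical character -/

/-- The square-one character of `GL22 F` given by the quadratic character of the
determinant of the first component. -/
noncomputable def chi0' : GL22 F →* ℂˣ := (tau F).comp (detFst F)

lemma chi0'_ker : (scalarHom F).range ≤ (chi0' F).ker := by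
  rintro x ⟨a, rfl⟩
  have hd : detFst F (scalarHom F a) = a * a := by
    apply Units.ext
    show (Matrix.scalar (Fin 2) (a : F)).det = ((a : F) * (a : F))
    rw [Matrix.scalar_apply, Matrix.det_diagonal, Fin.prod_univ_two]
  show chi0' F (scalarHom F a) = 1
  unfold chi0'
  rw [MonoidHom.comp_apply, hd, _root_.map_mul]
  exact tau_sq F a

/-- The canonical order-two character of `SO₄(F)`. -/
noncomputable def chi0 : SO4 F →* ℂˣ :=
  QuotientGroup.lift (scalarHom F).range (chi0' F) (chi0'_ker F)

lemma chi0_cls (p : GL22 F) : chi0 F (cls F p) = tau F (detFst F p) := rfl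

lemma chi0_sq (x : SO4 F) : chi0 F x * chi0 F x = 1 := by
  induction x using QuotientGroup.induction_on with
  | H p =>
    show chi0' F p * chi0' F p = 1
    unfold chi0'
    rw [MonoidHom.comp_apply]
    exact tau_sq F _

lemma neg_one_ne_one_units : (-1 : ℂˣ) ≠ 1 := by
  intro h
  have := congrArg Units.val h
  norm_num at this

lemma chi0_ne_one (hq : Odd (Fintype.card F)) : chi0 F ≠ 1 := by
  obtain ⟨u0, hu0⟩ := FiniteField.exists_nonsquare (F := F) (ringChar_ne_two F hq)
  have hu0' : u0 ≠ 0 := by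
    intro h
    exact hu0 (h ▸ ⟨0, by simp⟩)
  set u : Fˣ := Units.mk0 u0 hu0'
  have hu : ¬IsSquare u := by
    intro hs
    exact hu0 (hs.map (Units.coeHom F))
  intro h
  have : chi0 F (cls F (pairD F u)) = 1 := by rw [h]; rfl
  rw [chi0_cls] at this
  have hd : detFst F (pairD F u) = u := det_dmat F u
  rw [hd, tau_of_not_isSquare F hq hu] at this
  exact neg_one_ne_one_units this

/-! ### The values of any order-two character -/

lemma values (hq : Odd (Fintype.card F)) (χ : SO4 F →* ℂˣ)
    (h1 : ∀ x, χ x * χ x = 1) (h2 : χ ≠ 1) :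
    ∀ p : GL22 F,
      (IsSquare (Matrix.GeneralLinearGroup.det p.val.1) → χ (cls F p) = 1) ∧
      (¬ IsSquare (Matrix.GeneralLinearGroup.det p.val.1) → χ (cls F p) = -1) := by
  set χ' := χ.comp (QuotientGroup.mk' (scalarHom F).range) with hχ'def
  have hsq' : ∀ x, χ' x * χ' x = 1 := fun x => h1 _
  set φ := χ'.comp (pairD F) with hφdef
  have hval : ∀ p : GL22 F, χ (cls F p) = φ (detFst F p) := fun p =>
    chi_factor F hq χ' hsq' p
  have hφsq : ∀ a : Fˣ, IsSquare a → φ a = 1 := by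
    rintro a ⟨b, rfl⟩
    rw [_root_.map_mul]
    exact hsq' _
  have hφ2 : ∀ a : Fˣ, φ a * φ a = 1 := fun a => hsq' _
  have hpm : ∀ a : Fˣ, φ a = 1 ∨ φ a = -1 := by
    intro a
    have hv : (φ a : ℂ) * (φ a : ℂ) = 1 := by
      have := congrArg Units.val (hφ2 a)
      simpa using this
    rcases mul_self_eq_one_iff.mp hv with h | h
    · left; exact Units.ext h
    · right; exact Units.ext (by simpa using h)
  have hne : ∃ a : Fˣ, φ a ≠ 1 := by
    by_contra hall
    push_neg at hall
    apply h2
    apply QuotientGroup.monoidHom_ext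
    apply MonoidHom.ext
    intro p
    show χ (cls F p) = 1
    rw [hval p, hall]
  obtain ⟨a0, ha0⟩ := hne
  have ha0ns : ¬IsSquare a0 := fun h => ha0 (hφsq _ h)
  have hneg : φ a0 = -1 := (hpm a0).resolve_left ha0
  have hns : ∀ b : Fˣ, ¬IsSquare b → φ b = -1 := by
    intro b hb
    have hsqb : IsSquare (b * a0) := mul_of_not_isSquare F hq hb ha0ns
    have h : φ b * φ a0 = 1 := by
      rw [← _root_.map_mul]
      exact hφsq _ hsqb
    rw [hneg] at h
    rcases hpm b with h' | h'
    · rw [h'] at h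
      simp at h
    · exact h'
  intro p
  constructor
  · intro hs
    rw [hval p]
    exact hφsq _ (by rwa [detFst_apply])
  · intro hs
    rw [hval p]
    exact hns _ (by rwa [detFst_apply])

end SO4Proof

/-- There is exactly one group homomorphism `SO₄(F) → ℂˣ` of order exactly two, and it sends
`[(g,h)]` to `1` if `det g` is a square in `F^×` and to `-1` otherwise. -/
theorem existsUnique_order_two_character (hq : Odd (Fintype.card F)) :
    (∃! χ : SO4 F →* ℂˣ, (∀ x, χ x * χ x = 1) ∧ χ ≠ 1) ∧
    (∀ χ : SO4 F →* ℂˣ, ((∀ x, χ x * χ x = 1) ∧ χ ≠ 1) →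
      ∀ p : GL22 F,
        (IsSquare (Matrix.GeneralLinearGroup.det p.val.1) → χ (cls F p) = 1) ∧
        (¬ IsSquare (Matrix.GeneralLinearGroup.det p.val.1) → χ (cls F p) = -1)) := by
  have hsq0 := SO4Proof.chi0_sq F
  have hne0 := SO4Proof.chi0_ne_one F hq
  constructor
  · refine ⟨SO4Proof.chi0 F, ⟨hsq0, hne0⟩, ?_⟩
    intro χ ⟨h1, h2⟩
    have V := SO4Proof.values F hq χ h1 h2
    have V0 := SO4Proof.values F hq (SO4Proof.chi0 F) hsq0 hne0
    apply QuotientGroup.monoidHom_ext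
    apply MonoidHom.ext
    intro p
    show χ (cls F p) = SO4Proof.chi0 F (cls F p)
    by_cases hs : IsSquare (Matrix.GeneralLinearGroup.det p.val.1)
    · rw [(V p).1 hs, (V0 p).1 hs]
    · rw [(V p).2 hs, (V0 p).2 hs]
  · exact fun χ h => SO4Proof.values F hq χ h.1 h.2
end
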